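/- arXiv:0912.1411 — 13 statements merged into one kernel-verified Lean document; each statement's English description precedes it below -/
import Mathlib

section
/- If M is an n×n symmetric matrix over the reals and there exist indices i, j with 2·M_{ij} < M_{ii} + M_{jj}, then M cannot be written as the coordinatewise minimum of finitely many tropical rank-1 symmetric matrices (i.e., matrices of the form (v_i + v_j)_{ij} for some vector v). Hence its symmetric Barvinok rank is infinite. -/
/-- `M` equals the entrywise (tropical) minimum of the family of matrices `N k`. -/
def TropMinDecomp {n r : ℕ} (M : Fin n → Fin n → ℝ) (N : Fin r → Fin n → Fin n → ℝ) : Prop :=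
  ∀ i j, (∀ k, M i j ≤ N k i j) ∧ (∃ k, M i j = N k i j)

theorem stmt0 (n : ℕ) (M : Fin n → Fin n → ℝ) (hsym : ∀ i j, M i j = M j i)
    (h : ∃ i j, 2 * M i j < M i i + M j j) :
    ∀ (r : ℕ) (v : Fin r → Fin n → ℝ),
      ¬ TropMinDecomp M (fun k i j => v k i + v k j) := by
  rintro r v hd
  obtain ⟨i, j, hij⟩ := h
  obtain ⟨k, hk⟩ := (hd i j).2
  have h1 := (hd i i).1 k
  have h2 := (hd j j).1 k
  simp only at hk h1 h2
  linarith
end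

section
/- Let M be a symmetric n×n 0/1 matrix with all diagonal entries equal to 0, and let G_M be the graph on vertex set [n] with an edge between i and j (i ≠ j) whenever M_{ij} = 0. Then the symmetric Barvinok rank of M equals the minimum number of complete subgraphs (cliques) needed to cover every edge and every vertex of G_M. -/
/-- `M` has symmetric Barvinok rank at most `r`. -/
def SymRankLe {n : ℕ} (r : ℕ) (M : Fin n → Fin n → ℝ) : Prop :=
  ∃ v : Fin r → Fin n → ℝ, TropMinDecomp M (fun k i j => v k i + v k j)

/-- A family of `r` cliques of the zero-graph of `M` covering every vertex and
every edge (zero off-diagonal entry) of that graph. -/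
def IsCliqueCover {n : ℕ} (M : Fin n → Fin n → ℝ) (r : ℕ) (S : Fin r → Finset (Fin n)) : Prop :=
  (∀ k, ∀ i ∈ S k, ∀ j ∈ S k, M i j = 0) ∧
  (∀ i : Fin n, ∃ k, i ∈ S k) ∧
  (∀ i j : Fin n, i ≠ j → M i j = 0 → ∃ k, i ∈ S k ∧ j ∈ S k)

theorem stmt2 (n : ℕ) (M : Fin n → Fin n → ℝ)
    (hsym : ∀ i j, M i j = M j i)
    (h01 : ∀ i j, M i j = 0 ∨ M i j = 1)
    (hdiag : ∀ i, M i i = 0) :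
    sInf ((fun r : ℕ => (r : ℕ∞)) '' {r | SymRankLe r M}) =
      sInf ((fun r : ℕ => (r : ℕ∞)) '' {r | ∃ S : Fin r → Finset (Fin n), IsCliqueCover M r S}) := by
  classical
  have hset : {r | SymRankLe r M} =
      {r | ∃ S : Fin r → Finset (Fin n), IsCliqueCover M r S} := by
    ext r
    simp only [Set.mem_setOf_eq]
    constructor
    · rintro ⟨v, hv⟩
      have hvnn : ∀ k i, 0 ≤ v k i := by
        intro k i
        have h : M i i ≤ v k i + v k i := (hv i i).1 k
        rw [hdiag] at h; linarith
      refine ⟨fun k => Finset.univ.filter (fun i => v k i = 0), ?_, ?_, ?_⟩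
      · intro k i hi j hj
        simp only [Finset.mem_filter] at hi hj
        have h1 : M i j ≤ v k i + v k j := (hv i j).1 k
        rcases h01 i j with h | h
        · exact h
        · rw [hi.2, hj.2] at h1; linarith
      · intro i
        obtain ⟨k, hk⟩ := (hv i i).2
        have hk : M i i = v k i + v k i := hk
        rw [hdiag] at hk
        refine ⟨k, ?_⟩
        simp only [Finset.mem_filter, Finset.mem_univ, true_and]
        linarith
      · intro i j hij hM
        obtain ⟨k, hk⟩ := (hv i j).2
        have hk : M i j = v k i + v k j := hk
        rw [hM] at hk
        have h1 := hvnn k i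
        have h2 := hvnn k j
        refine ⟨k, ?_, ?_⟩ <;>
          simp only [Finset.mem_filter, Finset.mem_univ, true_and] <;> linarith
    · rintro ⟨S, hS1, hS2, hS3⟩
      refine ⟨fun k i => if i ∈ S k then 0 else 1, fun i j => ⟨?_, ?_⟩⟩
      · intro k
        by_cases hi : i ∈ S k <;> by_cases hj : j ∈ S k <;>
          simp only [if_pos, if_neg, hi, hj, if_true, if_false]
        · rw [hS1 k i hi j hj]; norm_num
        all_goals rcases h01 i j with h | h <;> rw [h] <;> norm_num
      · rcases h01 i j with h | h
        · by_cases hij : i = j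
          · subst hij
            obtain ⟨k, hk⟩ := hS2 i
            exact ⟨k, by simp [hk, h]⟩
          · obtain ⟨k, hk1, hk2⟩ := hS3 i j hij h
            exact ⟨k, by simp [hk1, hk2, h]⟩
        · obtain ⟨k, hk⟩ := hS2 i
          have hj : j ∉ S k := by
            intro hj
            have := hS1 k i hk j hj
            rw [this] at h; norm_num at h
          exact ⟨k, by simp [hk, hj, h]⟩
  rw [hset]
end

section
/- Let G be the complete bipartite graph K_{⌊n/2⌋,⌈n/2⌉} on n vertices. Then every clique cover of G (a family of complete subgraphs covering all edges and all vertices) has at least ⌊n²/4⌋ members, and the 0/1 symmetric matrix with zero diagonal whose off-diagonal zeros are the edges of G has symmetric Barvinok rank exactly ⌊n²/4⌋. -/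
/-- The 0/1 symmetric matrix with zero diagonal whose off-diagonal zeros are
exactly the edges of the complete bipartite graph `K_{⌊n/2⌋,⌈n/2⌉}`
(parts `{i : i < ⌊n/2⌋}` and its complement). -/
noncomputable def bipartiteMatrix (n : ℕ) : Fin n → Fin n → ℝ := fun i j =>
  if i = j then 0 else if (((i : ℕ) < n / 2) ↔ ((j : ℕ) < n / 2)) then 1 else 0

open Finset

section CliqueCover

variable {n r : ℕ} {M : Fin n → Fin n → ℝ}

theorem SymRankLe.exists_isCliqueCover (hM : SymRankLe r M) (hdiag : ∀ i, M i i = 0)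
    (hnonneg : ∀ i j, 0 ≤ M i j) : ∃ S, IsCliqueCover M r S := by
  obtain ⟨v, hv⟩ := hM
  have hv_nonneg : ∀ k i, 0 ≤ v k i := fun k i => by
    linarith [(hv i i).1 k, hdiag i]
  refine ⟨fun k => univ.filter (v k · = 0), ?_, fun i => ?_, fun i j _ hij => ?_⟩
  · intro k i hi j hj
    simp only [mem_filter, mem_univ, true_and] at hi hj
    linarith [(hv i j).1 k, hnonneg i j]
  · obtain ⟨k, hk⟩ := (hv i i).2
    refine ⟨k, ?_⟩
    simp only [mem_filter, mem_univ, true_and]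
    linarith [hdiag i, hv_nonneg k i]
  · obtain ⟨k, hk⟩ := (hv i j).2
    refine ⟨k, ?_, ?_⟩ <;> simp only [mem_filter, mem_univ, true_and] <;>
      linarith [hv_nonneg k i, hv_nonneg k j]

theorem IsCliqueCover.symRankLe {S : Fin r → Finset (Fin n)} (hS : IsCliqueCover M r S)
    (hM : ∀ i j, M i j = 0 ∨ M i j = 1) : SymRankLe r M := by
  obtain ⟨hclique, hvert, hedge⟩ := hS
  refine ⟨fun k i => if i ∈ S k then 0 else 1, fun i j => ⟨fun k => ?_, ?_⟩⟩
  · have hle : M i j ≤ 1 := (hM i j).elim (fun h => by simp [h]) (fun h => h.le)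
    by_cases hi : i ∈ S k <;> by_cases hj : j ∈ S k
    · simp [hi, hj, hclique k i hi j hj]
    all_goals
      simp only [hi, hj, if_true, if_false]
      linarith
  · rcases hM i j with h | h
    · obtain rfl | hij := eq_or_ne i j
      · obtain ⟨k, hk⟩ := hvert i
        exact ⟨k, by simp [h, hk]⟩
      · obtain ⟨k, hi, hj⟩ := hedge i j hij h
        exact ⟨k, by simp [h, hi, hj]⟩
    · obtain ⟨k, hi⟩ := hvert i
      have hj : j ∉ S k := fun hj => by simpa [h] using hclique k i hi j hj
      exact ⟨k, by simp [h, hi, hj]⟩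

theorem IsCliqueCover.card_mul_card_le {α β : Type*} [Fintype α] [Fintype β]
    {S : Fin r → Finset (Fin n)} (hS : IsCliqueCover M r S) (f : α → Fin n) (g : β → Fin n)
    (hfg : ∀ a b, f a ≠ g b ∧ M (f a) (g b) = 0)
    (hf : ∀ a a', M (f a) (f a') = 0 → a = a') (hg : ∀ b b', M (g b) (g b') = 0 → b = b') :
    Fintype.card α * Fintype.card β ≤ r := by
  obtain ⟨hclique, -, hedge⟩ := hS
  choose k hk using fun p : α × β => hedge _ _ (hfg p.1 p.2).1 (hfg p.1 p.2).2
  have hk_inj : Function.Injective k := by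
    rintro ⟨a, b⟩ ⟨a', b'⟩ hkk
    have ha := (hk (a', b')).1
    have hb := (hk (a', b')).2
    rw [← hkk] at ha hb
    exact Prod.ext (hf a a' (hclique _ _ (hk (a, b)).1 _ ha))
      (hg b b' (hclique _ _ (hk (a, b)).2 _ hb))
  simpa using Fintype.card_le_of_injective k hk_inj

end CliqueCover

theorem Nat.sq_div_four_eq_mul (n : ℕ) : n ^ 2 / 4 = n / 2 * (n - n / 2) := by
  obtain ⟨a, rfl | rfl⟩ := Nat.even_or_odd' n
  · rw [show (2 * a) ^ 2 = a * a * 4 by ring, show 2 * a / 2 = a by omega,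
      show 2 * a - a = a by omega]
    omega
  · rw [show (2 * a + 1) ^ 2 = a * (a + 1) * 4 + 1 by ring, show (2 * a + 1) / 2 = a by omega,
      show 2 * a + 1 - a = a + 1 by omega]
    omega

section Bipartite

variable {n : ℕ}

def lowerVertex (p : Fin (n / 2)) : Fin n := ⟨p, by omega⟩

def upperVertex (q : Fin (n - n / 2)) : Fin n := ⟨n / 2 + q, by omega⟩

theorem bipartiteMatrix_eq_zero_or_one (i j : Fin n) :
    bipartiteMatrix n i j = 0 ∨ bipartiteMatrix n i j = 1 := by
  unfold bipartiteMatrix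
  split_ifs <;> simp

theorem bipartiteMatrix_nonneg (i j : Fin n) : 0 ≤ bipartiteMatrix n i j := by
  rcases bipartiteMatrix_eq_zero_or_one i j with h | h <;> simp [h]

theorem bipartiteMatrix_self (i : Fin n) : bipartiteMatrix n i i = 0 := by
  simp [bipartiteMatrix]

theorem bipartiteMatrix_comm (i j : Fin n) : bipartiteMatrix n i j = bipartiteMatrix n j i := by
  unfold bipartiteMatrix
  simp only [eq_comm, iff_comm]

theorem bipartiteMatrix_eq_zero_iff {i j : Fin n} :
    bipartiteMatrix n i j = 0 ↔ i = j ∨ ((i : ℕ) < n / 2 ↔ n / 2 ≤ (j : ℕ)) := by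
  by_cases hij : i = j
  · simp [bipartiteMatrix, hij]
  · simp only [bipartiteMatrix, hij, if_false, false_or]
    split_ifs <;> simp only [one_ne_zero, false_iff, true_iff] <;> omega

theorem lowerVertex_ne_upperVertex (p : Fin (n / 2)) (q : Fin (n - n / 2)) :
    lowerVertex p ≠ upperVertex q := by
  simp only [lowerVertex, upperVertex, ne_eq, Fin.ext_iff]
  omega

theorem bipartiteMatrix_lowerVertex_upperVertex (p : Fin (n / 2)) (q : Fin (n - n / 2)) :
    bipartiteMatrix n (lowerVertex p) (upperVertex q) = 0 := by
  simp only [lowerVertex, upperVertex, bipartiteMatrix_eq_zero_iff]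
  omega

theorem bipartiteMatrix_upperVertex_lowerVertex (p : Fin (n / 2)) (q : Fin (n - n / 2)) :
    bipartiteMatrix n (upperVertex q) (lowerVertex p) = 0 := by
  rw [bipartiteMatrix_comm, bipartiteMatrix_lowerVertex_upperVertex]

theorem bipartiteMatrix_lowerVertex_eq_zero_iff {p p' : Fin (n / 2)} :
    bipartiteMatrix n (lowerVertex p) (lowerVertex p') = 0 ↔ p = p' := by
  simp only [lowerVertex, bipartiteMatrix_eq_zero_iff, Fin.ext_iff]
  omega

theorem bipartiteMatrix_upperVertex_eq_zero_iff {q q' : Fin (n - n / 2)} :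
    bipartiteMatrix n (upperVertex q) (upperVertex q') = 0 ↔ q = q' := by
  simp only [upperVertex, bipartiteMatrix_eq_zero_iff, Fin.ext_iff]
  omega

theorem exists_lowerVertex_or_upperVertex (i : Fin n) :
    (∃ p, lowerVertex p = i) ∨ ∃ q, upperVertex q = i := by
  by_cases hi : (i : ℕ) < n / 2
  · exact .inl ⟨⟨i, hi⟩, rfl⟩
  · exact .inr ⟨⟨i - n / 2, by omega⟩, Fin.ext (by simp only [upperVertex]; omega)⟩

theorem le_card_of_isCliqueCover_bipartiteMatrix {r : ℕ} {S : Fin r → Finset (Fin n)}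
    (hS : IsCliqueCover (bipartiteMatrix n) r S) : n ^ 2 / 4 ≤ r := by
  have h := hS.card_mul_card_le lowerVertex upperVertex
    (fun p q => ⟨lowerVertex_ne_upperVertex p q, bipartiteMatrix_lowerVertex_upperVertex p q⟩)
    (fun _ _ => bipartiteMatrix_lowerVertex_eq_zero_iff.1)
    (fun _ _ => bipartiteMatrix_upperVertex_eq_zero_iff.1)
  simpa [Nat.sq_div_four_eq_mul] using h

theorem exists_isCliqueCover_bipartiteMatrix (hn : 2 ≤ n) :
    ∃ S, IsCliqueCover (bipartiteMatrix n) (n ^ 2 / 4) S := by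
  let e : Fin (n ^ 2 / 4) ≃ Fin (n / 2) × Fin (n - n / 2) :=
    (finCongr (Nat.sq_div_four_eq_mul n)).trans finProdFinEquiv.symm
  have hedge : ∀ p q, ∃ k, (e k).1 = p ∧ (e k).2 = q := fun p q => ⟨e.symm (p, q), by simp⟩
  refine ⟨fun k => {lowerVertex (e k).1, upperVertex (e k).2}, ?_, fun i => ?_, ?_⟩
  · intro k i hi j hj
    simp only [mem_insert, mem_singleton] at hi hj
    rcases hi with rfl | rfl <;> rcases hj with rfl | rfl <;>
      simp only [bipartiteMatrix_self, bipartiteMatrix_lowerVertex_upperVertex,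
        bipartiteMatrix_upperVertex_lowerVertex]
  · rcases exists_lowerVertex_or_upperVertex i with ⟨p, rfl⟩ | ⟨q, rfl⟩
    · obtain ⟨k, hk, -⟩ := hedge p ⟨0, by omega⟩
      exact ⟨k, by simp [hk]⟩
    · obtain ⟨k, -, hk⟩ := hedge ⟨0, by omega⟩ q
      exact ⟨k, by simp [hk]⟩
  · intro i j hij h
    rcases exists_lowerVertex_or_upperVertex i with ⟨p, rfl⟩ | ⟨q, rfl⟩ <;>
      rcases exists_lowerVertex_or_upperVertex j with ⟨p', rfl⟩ | ⟨q', rfl⟩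
    · exact absurd (congrArg lowerVertex (bipartiteMatrix_lowerVertex_eq_zero_iff.1 h)) hij
    · obtain ⟨k, hp, hq⟩ := hedge p q'
      exact ⟨k, by simp [hp], by simp [hq]⟩
    · obtain ⟨k, hp, hq⟩ := hedge p' q
      exact ⟨k, by simp [hq], by simp [hp]⟩
    · exact absurd (congrArg upperVertex (bipartiteMatrix_upperVertex_eq_zero_iff.1 h)) hij

end Bipartite

theorem stmt3 (n : ℕ) (hn : 2 ≤ n) :
    (∀ (r : ℕ) (S : Fin r → Finset (Fin n)),
        IsCliqueCover (bipartiteMatrix n) r S → n ^ 2 / 4 ≤ r) ∧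
    SymRankLe (n ^ 2 / 4) (bipartiteMatrix n) ∧
    (∀ r : ℕ, SymRankLe r (bipartiteMatrix n) → n ^ 2 / 4 ≤ r) := by
  refine ⟨fun r S => le_card_of_isCliqueCover_bipartiteMatrix, ?_, fun r hr => ?_⟩
  · obtain ⟨S, hS⟩ := exists_isCliqueCover_bipartiteMatrix hn
    exact hS.symRankLe bipartiteMatrix_eq_zero_or_one
  · obtain ⟨S, hS⟩ := hr.exists_isCliqueCover bipartiteMatrix_self bipartiteMatrix_nonneg
    exact le_card_of_isCliqueCover_bipartiteMatrix hS
end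

section
/- Every n×n symmetric real matrix M satisfying M_{ii} + M_{jj} ≤ 2·M_{ij} for all i, j can be written as the entrywise minimum of at most max{n, ⌊n²/4⌋} tropical rank-1 symmetric matrices. In particular, every symmetric matrix of finite symmetric Barvinok rank has rank at most max{n, ⌊n²/4⌋}. -/
namespace SymBarvinok

theorem sq_div_four_eq {m : ℕ} (hm : 2 ≤ m) : m ^ 2 / 4 = (m - 2) ^ 2 / 4 + (m - 1) := by
  obtain ⟨k, rfl⟩ := Nat.exists_eq_add_of_le' hm
  have : (k + 2) ^ 2 = k ^ 2 + (k + 1) * 4 := by ring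
  rw [this, Nat.add_mul_div_right _ _ (by norm_num)]
  simp

theorem card_sdiff_pair_add_two {α : Type*} [DecidableEq α] {S : Finset α} {p q : α}
    (hp : p ∈ S) (hq : q ∈ S) (hpq : p ≠ q) : (S \ {p, q}).card + 2 = S.card := by
  rw [← Finset.card_pair hpq, Finset.card_sdiff_add_card_eq_card (by grind)]

variable {n : ℕ}

def Dominates (M : Fin n → Fin n → ℝ) (v : Fin n → ℝ) : Prop :=
  ∀ i j, M i j ≤ v i + v j

def Attains (M : Fin n → Fin n → ℝ) (L : List (Fin n → ℝ)) (i j : Fin n) : Prop :=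
  ∃ v ∈ L, M i j = v i + v j

def gap (M : Fin n → Fin n → ℝ) (i j : Fin n) : ℝ :=
  2 * M i j - M i i - M j j

variable {M : Fin n → Fin n → ℝ}

theorem Attains.symm (hsym : ∀ i j, M i j = M j i) {L : List (Fin n → ℝ)} {i j : Fin n}
    (hA : Attains M L i j) : Attains M L j i := by
  obtain ⟨v, hv, he⟩ := hA
  exact ⟨v, hv, by rw [hsym, he, add_comm]⟩

theorem Attains.mono {L L' : List (Fin n → ℝ)} (hL : L ⊆ L') {i j : Fin n}
    (hA : Attains M L i j) : Attains M L' i j :=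
  let ⟨v, hv, he⟩ := hA
  ⟨v, hL hv, he⟩

theorem symRankLe_of_attains {L : List (Fin n → ℝ)} {r : ℕ} (hdom : ∀ v ∈ L, Dominates M v)
    (hatt : ∀ i j, Attains M L i j) (hlen : L.length ≤ r) : SymRankLe r M := by
  cases L with
  | nil => exact ⟨0, fun i => by obtain ⟨_, hv, -⟩ := hatt i i; cases hv⟩
  | cons d L =>
    refine ⟨fun k => (d :: L).getD k d, fun i j => ⟨fun k => ?_, ?_⟩⟩
    · dsimp only
      by_cases hk : (k : ℕ) < (d :: L).length
      · rw [List.getD_eq_getElem _ _ hk]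
        exact hdom _ (List.getElem_mem hk) i j
      · rw [List.getD_eq_default _ _ (by omega)]
        exact hdom d List.mem_cons_self i j
    · obtain ⟨v, hv, he⟩ := hatt i j
      obtain ⟨k, hk, rfl⟩ := List.mem_iff_getElem.mp hv
      refine ⟨⟨k, by omega⟩, ?_⟩
      dsimp only
      rwa [List.getD_eq_getElem _ _ hk]

theorem exists_dominates_extend (T : Finset (Fin n)) (u : Fin n → ℝ)
    (hu : ∀ i ∈ T, ∀ j ∈ T, M i j ≤ u i + u j) : ∃ v, Dominates M v ∧ ∀ i ∈ T, v i = u i := by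
  obtain ⟨K, hK⟩ := Finite.exists_le fun x : Fin n × Fin n => |M x.1 x.2| + |u x.1| + |u x.2|
  refine ⟨fun z => if z ∈ T then u z else K, fun i j => ?_, fun i hi => if_pos hi⟩
  have hKij : |M i j| + |u i| + |u j| ≤ K := hK (i, j)
  dsimp only
  split_ifs with hi hj hj
  · exact hu i hi j hj
  all_goals linarith [le_abs_self (M i j), abs_nonneg (M i j), neg_abs_le (u i),
    neg_abs_le (u j), abs_nonneg (u i), abs_nonneg (u j)]

theorem exists_cherry (hsym : ∀ i j, M i j = M j i) (h : ∀ i j, M i i + M j j ≤ 2 * M i j)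
    {c a b : Fin n} (hab : M a b + M c c ≤ M c a + M c b) :
    ∃ v, Dominates M v ∧ M c c = v c + v c ∧ M c a = v c + v a ∧ M c b = v c + v b := by
  obtain ⟨v, hv, hvu⟩ := exists_dominates_extend (M := M) {c, a, b} (fun z => M c z - M c c / 2) (by
    have := h c a
    have := h c b
    have := hsym a c
    have := hsym b c
    have := hsym a b
    simp only [Finset.mem_insert, Finset.mem_singleton]
    rintro i (rfl | rfl | rfl) j (rfl | rfl | rfl) <;> linarith)
  have hc := hvu c (by simp)
  have ha := hvu a (by simp)
  have hb := hvu b (by simp)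
  refine ⟨v, hv, ?_, ?_, ?_⟩ <;> simp only [hc, ha, hb] <;> ring

theorem exists_two_cherries (hsym : ∀ i j, M i j = M j i) (h : ∀ i j, M i i + M j j ≤ 2 * M i j)
    (p q j : Fin n) :
    ∃ L : List (Fin n → ℝ), L.length = 2 ∧ (∀ v ∈ L, Dominates M v) ∧ Attains M L p p ∧
      Attains M L q q ∧ Attains M L p q ∧ Attains M L p j ∧ Attains M L q j := by
  wlog hA : M q j + M p p ≤ M p q + M p j generalizing p q
  · obtain ⟨L, hlen, hdom, hqq, hpp, hqp, hqj, hpj⟩ :=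
      this q p (by linarith [h p q, hsym p q])
    exact ⟨L, hlen, hdom, hpp, hqq, hqp.symm hsym, hpj, hqj⟩
  obtain ⟨v, hv, hpp, hpq, hpj⟩ := exists_cherry hsym h hA
  obtain ⟨w, hw, hqq, hqj, -⟩ :=
    exists_cherry hsym h (c := q) (a := j) (b := j) (by linarith [h q j])
  have hdom : ∀ u ∈ [v, w], Dominates M u := by
    simp only [List.mem_cons, List.not_mem_nil, or_false]
    rintro u (rfl | rfl) <;> assumption
  exact ⟨[v, w], rfl, hdom, ⟨v, by simp, hpp⟩, ⟨w, by simp, hqq⟩, ⟨v, by simp, hpq⟩,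
    ⟨v, by simp, hpj⟩, ⟨w, by simp, hqj⟩⟩

theorem exists_min_gap_pair {S : Finset (Fin n)} (hS : 1 < S.card) :
    ∃ p ∈ S, ∃ q ∈ S, p ≠ q ∧ ∀ a ∈ S, ∀ b ∈ S, a ≠ b → gap M p q ≤ gap M a b := by
  obtain ⟨a, ha, b, hb, hab⟩ := Finset.one_lt_card.mp hS
  obtain ⟨⟨p, q⟩, hpq, hmin⟩ := S.offDiag.exists_min_image (fun x => gap M x.1 x.2)
    ⟨(a, b), Finset.mem_offDiag.mpr ⟨ha, hb, hab⟩⟩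
  obtain ⟨hp, hq, hpq⟩ := Finset.mem_offDiag.mp hpq
  exact ⟨p, hp, q, hq, hpq, fun a ha b hb hab => hmin (a, b) (Finset.mem_offDiag.mpr ⟨ha, hb, hab⟩)⟩

theorem cherry_cond_of_gap_le (h : ∀ i j, M i i + M j j ≤ 2 * M i j) {p q j : Fin n}
    (hle : gap M p q ≤ gap M j p) : M p q + M j j ≤ M j p + M j q := by
  unfold gap at hle
  linarith [h j q]

theorem exists_cherries (hsym : ∀ i j, M i j = M j i) (h : ∀ i j, M i i + M j j ≤ 2 * M i j)
    {p q : Fin n} (T : Finset (Fin n)) (hT : ∀ j ∈ T, M p q + M j j ≤ M j p + M j q) :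
    ∃ L : List (Fin n → ℝ), L.length = T.card ∧ (∀ v ∈ L, Dominates M v) ∧
      ∀ j ∈ T, Attains M L j j ∧ Attains M L j p ∧ Attains M L j q := by
  choose! w hw using fun j hj => exists_cherry hsym h (hT j hj)
  refine ⟨T.toList.map w, by simp, ?_, fun j hj => ?_⟩
  · simp only [List.mem_map, Finset.mem_toList]
    rintro _ ⟨j, hj, rfl⟩
    exact (hw j hj).1
  have hmem : w j ∈ T.toList.map w := List.mem_map_of_mem (Finset.mem_toList.mpr hj)
  obtain ⟨-, hjj, hjp, hjq⟩ := hw j hj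
  exact ⟨⟨w j, hmem, hjj⟩, ⟨w j, hmem, hjp⟩, ⟨w j, hmem, hjq⟩⟩

theorem exists_rows_cover (hsym : ∀ i j, M i j = M j i) (h : ∀ i j, M i i + M j j ≤ 2 * M i j)
    {S : Finset (Fin n)} {p q j₀ : Fin n} (hp : p ∈ S) (hq : q ∈ S) (hpq : p ≠ q)
    (hmin : ∀ a ∈ S, ∀ b ∈ S, a ≠ b → gap M p q ≤ gap M a b)
    (hj₀ : j₀ ∈ S \ {p, q}) :
    ∃ L : List (Fin n → ℝ), L.length + 1 = S.card ∧ (∀ v ∈ L, Dominates M v) ∧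
      (∀ i ∈ S, ∀ j ∈ S, i = p ∨ i = q → Attains M L i j) ∧
      ∀ i ∈ S, i ≠ j₀ → Attains M L i i := by
  set T := (S \ {p, q}).erase j₀
  have hmemT : ∀ j, j ∈ T ↔ j ≠ j₀ ∧ j ∈ S ∧ ¬(j = p ∨ j = q) := by
    simp [T, Finset.mem_erase, Finset.mem_sdiff]
  obtain ⟨L₀, hlen₀, hdom₀, hpp, hqq, hpq', hpj₀, hqj₀⟩ := exists_two_cherries hsym h p q j₀
  obtain ⟨L₁, hlen₁, hdom₁, hT⟩ := exists_cherries hsym h T fun j hj => by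
    obtain ⟨-, hjS, hjpq⟩ := (hmemT j).mp hj
    exact cherry_cond_of_gap_le h (hmin j hjS p hp fun hjp => hjpq (Or.inl hjp))
  have hL₀ : L₀ ⊆ L₀ ++ L₁ := List.subset_append_left _ _
  have hL₁ : L₁ ⊆ L₀ ++ L₁ := List.subset_append_right _ _
  have hcases : ∀ j ∈ S, j = p ∨ j = q ∨ j = j₀ ∨ j ∈ T := fun j hj => by
    rw [hmemT]
    tauto
  refine ⟨L₀ ++ L₁, ?_, ?_, ?_, ?_⟩
  · have := card_sdiff_pair_add_two hp hq hpq
    have := Finset.card_pos.mpr ⟨j₀, hj₀⟩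
    rw [List.length_append, hlen₀, hlen₁, Finset.card_erase_of_mem hj₀]
    omega
  · intro v hv
    rcases List.mem_append.mp hv with hv | hv
    exacts [hdom₀ v hv, hdom₁ v hv]
  · have hrows : ∀ j ∈ S, Attains M (L₀ ++ L₁) p j ∧ Attains M (L₀ ++ L₁) q j := by
      intro j hj
      rcases hcases j hj with rfl | rfl | rfl | hjT
      · exact ⟨hpp.mono hL₀, (hpq'.mono hL₀).symm hsym⟩
      · exact ⟨hpq'.mono hL₀, hqq.mono hL₀⟩
      · exact ⟨hpj₀.mono hL₀, hqj₀.mono hL₀⟩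
      · exact ⟨((hT j hjT).2.1.mono hL₁).symm hsym, ((hT j hjT).2.2.mono hL₁).symm hsym⟩
    rintro i - j hj (rfl | rfl)
    exacts [(hrows j hj).1, (hrows j hj).2]
  · intro i hi hij₀
    rcases hcases i hi with rfl | rfl | rfl | hiT
    · exact hpp.mono hL₀
    · exact hqq.mono hL₀
    · exact absurd rfl hij₀
    · exact (hT i hiT).1.mono hL₁

def HasOffDiagCover (M : Fin n → Fin n → ℝ) (S : Finset (Fin n)) : Prop :=
  ∃ w ∈ S, ∃ L : List (Fin n → ℝ), L.length ≤ S.card ^ 2 / 4 ∧ (∀ v ∈ L, Dominates M v) ∧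
    Attains M L w w ∧ ∀ i ∈ S, ∀ j ∈ S, i ≠ j → Attains M L i j

theorem exists_cover_of_hasOffDiagCover (hsym : ∀ i j, M i j = M j i)
    (h : ∀ i j, M i i + M j j ≤ 2 * M i j) {S : Finset (Fin n)} (hS : 2 ≤ S.card)
    (hcover : ∀ T ⊆ S, T.card + 2 = S.card → HasOffDiagCover M T) :
    ∃ L : List (Fin n → ℝ), L.length ≤ S.card ^ 2 / 4 ∧ (∀ v ∈ L, Dominates M v) ∧
      ∀ i ∈ S, ∀ j ∈ S, Attains M L i j := by
  obtain ⟨p, hp, q, hq, hpq, hmin⟩ := exists_min_gap_pair (M := M) hS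
  have hcard := card_sdiff_pair_add_two hp hq hpq
  obtain ⟨w, hw, L₂, hlen₂, hdom₂, hww, hoff⟩ := hcover (S \ {p, q}) Finset.sdiff_subset hcard
  obtain ⟨L₁, hlen₁, hdom₁, hside, hdiag⟩ := exists_rows_cover hsym h hp hq hpq hmin hw
  have hL₁ : L₁ ⊆ L₁ ++ L₂ := List.subset_append_left _ _
  have hL₂ : L₂ ⊆ L₁ ++ L₂ := List.subset_append_right _ _
  refine ⟨L₁ ++ L₂, ?_, ?_, ?_⟩
  · rw [List.length_append, sq_div_four_eq hS, ← hcard, Nat.add_sub_cancel]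
    omega
  · intro v hv
    rcases List.mem_append.mp hv with hv | hv
    exacts [hdom₁ v hv, hdom₂ v hv]
  · intro i hi j hj
    by_cases hipq : i = p ∨ i = q
    · exact (hside i hi j hj hipq).mono hL₁
    by_cases hjpq : j = p ∨ j = q
    · exact ((hside j hj i hi hjpq).mono hL₁).symm hsym
    have hiT : i ∈ S \ {p, q} := by simpa [hi] using hipq
    have hjT : j ∈ S \ {p, q} := by simpa [hj] using hjpq
    by_cases hij : i = j
    · subst hij
      by_cases hiw : i = w
      · exact hiw ▸ hww.mono hL₂
      · exact (hdiag i hi hiw).mono hL₁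
    · exact (hoff i hiT j hjT hij).mono hL₂

theorem hasOffDiagCover (hsym : ∀ i j, M i j = M j i) (h : ∀ i j, M i i + M j j ≤ 2 * M i j)
    (S : Finset (Fin n)) (hS : 2 ≤ S.card) : HasOffDiagCover M S := by
  induction S using Finset.strongInduction with
  | H S ih =>
  rcases (by omega : S.card = 2 ∨ S.card = 3 ∨ 4 ≤ S.card) with h2 | h3 | h4
  · obtain ⟨a, b, hab, rfl⟩ := Finset.card_eq_two.mp h2
    obtain ⟨v, hv, haa, hab', -⟩ :=
      exists_cherry hsym h (c := a) (a := b) (b := b) (by linarith [h a b])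
    have hab'' : Attains M [v] a b := ⟨v, by simp, hab'⟩
    refine ⟨a, by simp, [v], by simp [h2], by simpa using hv, ⟨v, by simp, haa⟩, ?_⟩
    simp only [Finset.mem_insert, Finset.mem_singleton]
    rintro i (rfl | rfl) j (rfl | rfl) hij
    exacts [absurd rfl hij, hab'', hab''.symm hsym, absurd rfl hij]
  · obtain ⟨p, hp, q, hq, hpq, hmin⟩ := exists_min_gap_pair (M := M) (S := S) (by omega)
    have hcard := card_sdiff_pair_add_two hp hq hpq
    obtain ⟨r, hr⟩ := Finset.card_pos.mp (by omega : 0 < (S \ {p, q}).card)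
    obtain ⟨L, hlen, hdom, hside, hdiag⟩ := exists_rows_cover hsym h hp hq hpq hmin hr
    refine ⟨p, hp, L, by rw [h3]; omega, hdom, hside p hp p hp (Or.inl rfl), ?_⟩
    intro i hi j hj hij
    by_cases hipq : i = p ∨ i = q
    · exact hside i hi j hj hipq
    by_cases hjpq : j = p ∨ j = q
    · exact (hside j hj i hi hjpq).symm hsym
    have hone : (S \ {p, q}).card ≤ 1 := by omega
    refine absurd (Finset.card_le_one.mp hone i ?_ j ?_) hij <;> simp [*]
  · obtain ⟨L, hlen, hdom, hall⟩ := exists_cover_of_hasOffDiagCover hsym h (by omega)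
      fun T hTS hT => ih T (Finset.ssubset_iff_subset_ne.mpr ⟨hTS, by rintro rfl; omega⟩) (by omega)
    obtain ⟨w, hw⟩ := Finset.card_pos.mp (by omega : 0 < S.card)
    exact ⟨w, hw, L, hlen, hdom, hall w hw w hw, fun i hi j hj _ => hall i hi j hj⟩

theorem exists_cover_of_forall_ne (hsym : ∀ i j, M i j = M j i)
    (h : ∀ i j, M i i + M j j ≤ 2 * M i j) (σ : Fin n → Fin n)
    (hσ : ∀ i j, i ≠ j → j = σ i ∨ i = σ j) :
    ∃ L : List (Fin n → ℝ), L.length = n ∧ (∀ v ∈ L, Dominates M v) ∧ ∀ i j, Attains M L i j := by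
  have hcherry : ∀ i, ∃ v, Dominates M v ∧ M i i = v i + v i ∧ M i (σ i) = v i + v (σ i) :=
    fun i => (exists_cherry hsym h (c := i) (a := σ i) (b := σ i) (by linarith [h i (σ i)])).imp
      fun v hv => ⟨hv.1, hv.2.1, hv.2.2.1⟩
  choose w hw using hcherry
  refine ⟨List.ofFn w, List.length_ofFn, ?_, fun i j => ?_⟩
  · simp only [List.mem_ofFn]
    rintro _ ⟨i, rfl⟩
    exact (hw i).1
  have hmem : ∀ i, w i ∈ List.ofFn w := fun i => List.mem_ofFn.mpr ⟨i, rfl⟩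
  by_cases hij : i = j
  · exact hij ▸ ⟨w i, hmem i, (hw i).2.1⟩
  rcases hσ i j hij with rfl | rfl
  · exact ⟨w i, hmem i, (hw i).2.2⟩
  · exact Attains.symm hsym (L := List.ofFn w) ⟨w j, hmem j, (hw j).2.2⟩

end SymBarvinok

open SymBarvinok in
theorem stmt4 (n : ℕ) (M : Fin n → Fin n → ℝ) (hsym : ∀ i j, M i j = M j i)
    (h : ∀ i j, M i i + M j j ≤ 2 * M i j) :
    SymRankLe (max n (n ^ 2 / 4)) M := by
  obtain ⟨L, hlen, hdom, hatt⟩ : ∃ L : List (Fin n → ℝ), L.length ≤ max n (n ^ 2 / 4) ∧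
      (∀ v ∈ L, Dominates M v) ∧ ∀ i j, Attains M L i j := by
    rcases le_or_gt n 3 with hn | hn
    · obtain ⟨L, hlen, hdom, hatt⟩ := exists_cover_of_forall_ne hsym h (finRotate n)
        (by interval_cases n <;> decide)
      exact ⟨L, hlen.trans_le (le_max_left _ _), hdom, hatt⟩
    · have hcard : (Finset.univ : Finset (Fin n)).card = n := Finset.card_fin n
      obtain ⟨L, hlen, hdom, hatt⟩ := exists_cover_of_hasOffDiagCover hsym h
        (S := Finset.univ) (by omega) fun T _ hT => hasOffDiagCover hsym h T (by omega)
      rw [hcard] at hlen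
      exact ⟨L, hlen.trans (le_max_right _ _), hdom,
        fun i j => hatt i (Finset.mem_univ _) j (Finset.mem_univ _)⟩
  exact symRankLe_of_attains hdom hatt hlen
end

section
/- For n ≥ 3, the n×n dissimilarity matrix M defined by M_{ij} = min(i, j) (for 1 ≤ i < j ≤ n) has star tree rank exactly n−2; in particular, it cannot be written as the entrywise minimum of fewer than n−2 star tree matrices. -/
/-!
Let `v₁, …, v_r` be star trees whose minimum is `M`. Since `M` is feasible for every star tree
(`min(i, j) ≤ v i + v j`), two tight pairs `{x, y}`, `{z, w}` of the same star tree can only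
be disjoint when the intervals `[x, y]` and `[z, w]` are: comparing the tight matching with
the other two matchings of `{x, y, z, w}` rules out crossing and nesting. Hence a star tree
that is tight on a pair made of one of the two smallest and one of the two largest indices
is tight only on pairs through one of these two indices. The four such "corner" pairs then
either need four different star trees, and the four extreme indices can be removed together
with them, or two of them share a star tree, and a single index can be removed with it; in
both cases induction on the number of indices gives `r ≥ n - 2`. Only the pairs other than
the two smallest and the two largest ones need to be covered along the way.
-/

/-- Off-diagonal entrywise (tropical) minimum decomposition of a dissimilarity matrix. -/
def DissMinDecomp {n r : ℕ} (M : Fin n → Fin n → ℝ) (N : Fin r → Fin n → Fin n → ℝ) : Prop :=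
  ∀ i j : Fin n, i ≠ j → (∀ k, M i j ≤ N k i j) ∧ (∃ k, M i j = N k i j)

/-- The dissimilarity matrix `M` has star tree rank at most `r`: it is the
entrywise minimum of `r` star tree matrices `(v k i + v k j)`. -/
def StarRankLe {n : ℕ} (r : ℕ) (M : Fin n → Fin n → ℝ) : Prop :=
  ∃ v : Fin r → Fin n → ℝ, DissMinDecomp M (fun k i j => v k i + v k j)

/-- The dissimilarity matrix with `M i j = min(i,j)` for `1 ≤ i < j ≤ n`
(indices shifted to start at 1). -/
noncomputable def minMatrix (n : ℕ) : Fin n → Fin n → ℝ := fun i j =>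
  (min ((i : ℕ) + 1) ((j : ℕ) + 1) : ℕ)

namespace StarTreeRank

variable {α ι : Type*} [LinearOrder α]

def IntervalSeparated (R : α → α → Prop) : Prop :=
  ∀ ⦃x y z w⦄, R x y → R z w → x < y → x < z → z < y → z < w → y = w

theorem intervalSeparated_tight {f v : α → ℝ} (hf : StrictMono f)
    (hv : ∀ x y, x < y → f x ≤ v x + v y) :
    IntervalSeparated fun x y => v x + v y = f x := by
  intro x y z w hxy hzw _ hxz hzy hzw_lt
  have hxz' := hv x z hxz
  rcases lt_trichotomy y w with hyw | rfl | hwy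
  · linarith [hv y w hyw, hf hzy]
  · rfl
  · linarith [hv w y hwy, hf hzw_lt]

theorem IntervalSeparated.lt_or_lt {R : α → α → Prop} (hR : IntervalSeparated R)
    {p q x y : α} (hpq : R p q) (hxy : R x y) (hpq_lt : p < q) (hxy_lt : x < y)
    (hxp : x ≠ p) (hxq : x ≠ q) (hyp : y ≠ p) (hyq : y ≠ q) : y < p ∨ q < x := by
  rcases lt_or_gt_of_ne hxp with hx | hx
  · refine .inl (lt_of_le_of_ne (not_lt.1 fun hpy => hyq ?_) hyp)
    exact hR hxy hpq hxy_lt hx hpy hpq_lt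
  · refine .inr (lt_of_le_of_ne (not_lt.1 fun hxq' => hyq ?_) hxq.symm)
    exact (hR hpq hxy hpq_lt hx hxq' hxy_lt).symm

def Meets (R : α → α → Prop) (S : Finset α) (p q : α) : Prop :=
  ∀ x ∈ S, ∀ y ∈ S, x < y → R x y → x = p ∨ x = q ∨ y = p ∨ y = q

theorem IntervalSeparated.meets {R : α → α → Prop} (hR : IntervalSeparated R) {S : Finset α}
    {p q : α} (hpq : R p q) (hpq_lt : p < q) (hp : ∀ x ∈ S, ∀ y ∈ S, x < y → p ≤ y)
    (hq : ∀ x ∈ S, ∀ y ∈ S, x < y → x ≤ q) : Meets R S p q := by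
  intro x hx y hy hxy hRxy
  by_contra! h
  rcases hR.lt_or_lt hpq hRxy hpq_lt hxy h.1 h.2.1 h.2.2.1 h.2.2.2 with h' | h'
  · exact absurd (hp x hx y hy hxy) (not_le.2 h')
  · exact absurd (hq x hx y hy hxy) (not_le.2 h')

def IsInnerPair (S : Finset α) (x y : α) : Prop :=
  (∃ z ∈ S, z < y ∧ z ≠ x) ∧ ∃ z ∈ S, x < z ∧ z ≠ y

theorem IsInnerPair.mono {S S' : Finset α} {x y : α} (h : IsInnerPair S' x y) (hS : S' ⊆ S) :
    IsInnerPair S x y :=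
  ⟨h.1.imp fun _ ⟨hz, hz'⟩ => ⟨hS hz, hz'⟩, h.2.imp fun _ ⟨hz, hz'⟩ => ⟨hS hz, hz'⟩⟩

def Covers (S : Finset α) (K : Finset ι) (T : ι → α → α → Prop) : Prop :=
  ∀ x ∈ S, ∀ y ∈ S, x < y → IsInnerPair S x y → ∃ k ∈ K, T k x y

structure Corners (S : Finset α) (a b c d : α) : Prop where
  a_mem : a ∈ S
  b_mem : b ∈ S
  c_mem : c ∈ S
  d_mem : d ∈ S
  a_lt_b : a < b
  b_lt_c : b < c
  c_lt_d : c < d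
  a_le : ∀ z ∈ S, a ≤ z
  le_d : ∀ z ∈ S, z ≤ d
  b_le : ∀ x ∈ S, ∀ y ∈ S, x < y → b ≤ y
  le_c : ∀ x ∈ S, ∀ y ∈ S, x < y → x ≤ c

theorem exists_isInnerPair {S : Finset α} (hS : 3 ≤ S.card) :
    ∃ x ∈ S, ∃ y ∈ S, x < y ∧ IsInnerPair S x y := by
  set f := S.orderEmbOfFin rfl
  have hlt : ∀ i j : ℕ, ∀ hi hj, i < j → f ⟨i, hi⟩ < f ⟨j, hj⟩ := fun i j _ _ h => by
    simpa only [OrderEmbedding.lt_iff_lt, Fin.mk_lt_mk]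
  have hmem : ∀ i, f i ∈ S := S.orderEmbOfFin_mem rfl
  refine ⟨f ⟨0, by omega⟩, hmem _, f ⟨2, by omega⟩, hmem _, hlt _ _ _ _ (by omega),
    ⟨f ⟨1, by omega⟩, hmem _, hlt _ _ _ _ (by omega), (hlt _ _ _ _ (by omega)).ne'⟩,
    ⟨f ⟨1, by omega⟩, hmem _, hlt _ _ _ _ (by omega), (hlt _ _ _ _ (by omega)).ne⟩⟩

theorem exists_corners {S : Finset α} (hS : 4 ≤ S.card) : ∃ a b c d, Corners S a b c d := by
  set f := S.orderEmbOfFin rfl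
  have hmem : ∀ z ∈ S, ∃ i, f i = z := fun z hz => by
    rw [← Set.mem_range, Finset.range_orderEmbOfFin]; exact hz
  have hle : ∀ i j, f i ≤ f j ↔ (i : ℕ) ≤ j := fun i j => f.le_iff_le.trans Fin.le_def
  have hlt : ∀ i j, f i < f j ↔ (i : ℕ) < j := fun i j => f.lt_iff_lt.trans Fin.lt_def
  refine ⟨f ⟨0, by omega⟩, f ⟨1, by omega⟩, f ⟨S.card - 2, by omega⟩, f ⟨S.card - 1, by omega⟩,
    S.orderEmbOfFin_mem rfl _, S.orderEmbOfFin_mem rfl _, S.orderEmbOfFin_mem rfl _,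
    S.orderEmbOfFin_mem rfl _, (hlt _ _).2 (by simp), (hlt _ _).2 (by simp; omega),
    (hlt _ _).2 (by simp; omega), fun z hz => ?_, fun z hz => ?_,
    fun x hx y hy hxy => ?_, fun x hx y hy hxy => ?_⟩
  · obtain ⟨i, rfl⟩ := hmem z hz
    exact (hle _ _).2 (Nat.zero_le _)
  · obtain ⟨i, rfl⟩ := hmem z hz
    exact (hle _ _).2 (by simp only; omega)
  · obtain ⟨i, rfl⟩ := hmem x hx
    obtain ⟨j, rfl⟩ := hmem y hy
    exact (hle _ _).2 (by simp only; rw [hlt] at hxy; omega)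
  · obtain ⟨i, rfl⟩ := hmem x hx
    obtain ⟨j, rfl⟩ := hmem y hy
    exact (hle _ _).2 (by simp only; rw [hlt] at hxy; omega)

namespace Corners

variable {S : Finset α} {a b c d : α}

theorem not_isInnerPair_top (hC : Corners S a b c d) {S' : Finset α} (hS' : S' ⊆ S) :
    ¬ IsInnerPair S' c d := by
  rintro ⟨-, z, hz, hcz, hzd⟩
  have hz := hS' hz
  exact (hC.le_c z hz d hC.d_mem (lt_of_le_of_ne (hC.le_d z hz) hzd)).not_gt hcz

theorem not_isInnerPair_bot (hC : Corners S a b c d) {S' : Finset α} (hS' : S' ⊆ S) :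
    ¬ IsInnerPair S' a b := by
  rintro ⟨⟨z, hz, hzb, hza⟩, -⟩
  have hz := hS' hz
  exact (hC.b_le a hC.a_mem z hz (lt_of_le_of_ne (hC.a_le z hz) hza.symm)).not_gt hzb

theorem isInnerPair (hC : Corners S a b c d) {p q : α} (hp : p = a ∨ p = b)
    (hq : q = c ∨ q = d) : IsInnerPair S p q := by
  have := hC.a_lt_b; have := hC.b_lt_c; have := hC.c_lt_d
  rcases hp with hp | hp <;> rcases hq with hq | hq <;> subst p q
  · exact ⟨⟨b, hC.b_mem, by order, by order⟩, ⟨b, hC.b_mem, by order, by order⟩⟩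
  · exact ⟨⟨b, hC.b_mem, by order, by order⟩, ⟨c, hC.c_mem, by order, by order⟩⟩
  · exact ⟨⟨a, hC.a_mem, by order, by order⟩, ⟨d, hC.d_mem, by order, by order⟩⟩
  · exact ⟨⟨a, hC.a_mem, by order, by order⟩, ⟨c, hC.c_mem, by order, by order⟩⟩

theorem exists_meets (hC : Corners S a b c d) {T : ι → α → α → Prop} {K : Finset ι}
    (hT : ∀ k, IntervalSeparated (T k)) (hcov : Covers S K T) {p q : α} (hp : p = a ∨ p = b)
    (hq : q = c ∨ q = d) :
    ∃ k ∈ K, T k p q ∧ Meets (T k) S p q := by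
  have := hC.a_lt_b; have := hC.b_lt_c; have := hC.c_lt_d
  have hpb : p ≤ b := by rcases hp with rfl | rfl <;> order
  have hcq : c ≤ q := by rcases hq with rfl | rfl <;> order
  obtain ⟨k, hk, hpq⟩ := hcov p (by rcases hp with rfl | rfl; exacts [hC.a_mem, hC.b_mem])
    q (by rcases hq with rfl | rfl; exacts [hC.c_mem, hC.d_mem]) (by order)
    (hC.isInnerPair hp hq)
  exact ⟨k, hk, hpq, (hT k).meets hpq (by order)
    (fun x hx y hy hxy => hpb.trans (hC.b_le x hx y hy hxy))
    (fun x hx y hy hxy => (hC.le_c x hx y hy hxy).trans hcq)⟩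

end Corners

variable [DecidableEq α] [DecidableEq ι] {T : ι → α → α → Prop}

theorem Covers.sdiff {S P : Finset α} {K Q : Finset ι} (hcov : Covers S K T)
    (hQ : ∀ k ∈ Q, ∀ x ∈ S \ P, ∀ y ∈ S \ P, x < y → IsInnerPair (S \ P) x y → ¬ T k x y) :
    Covers (S \ P) (K \ Q) T := by
  intro x hx y hy hxy hin
  obtain ⟨k, hk, hT⟩ := hcov x (Finset.sdiff_subset hx) y (Finset.sdiff_subset hy) hxy
    (hin.mono Finset.sdiff_subset)
  exact ⟨k, Finset.mem_sdiff.2 ⟨hk, fun hkQ => hQ k hkQ x hx y hy hxy hin hT⟩, hT⟩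

theorem card_sub_two_le_of_sdiff {S P : Finset α} {K Q : Finset ι} (hcov : Covers S K T)
    (hP : P ⊆ S) (hPne : P.Nonempty) (hQ : Q ⊆ K) (hPQ : P.card ≤ Q.card)
    (hfree : ∀ k ∈ Q, ∀ x ∈ S \ P, ∀ y ∈ S \ P, x < y → IsInnerPair (S \ P) x y → ¬ T k x y)
    (ih : ∀ S' ⊂ S, ∀ K : Finset ι, Covers S' K T → S'.card - 2 ≤ K.card) :
    S.card - 2 ≤ K.card := by
  have h := ih _ (Finset.sdiff_ssubset hP hPne) _ (hcov.sdiff hfree)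
  rw [Finset.card_sdiff_of_subset hP, Finset.card_sdiff_of_subset hQ] at h
  have := Finset.card_le_card hP
  have := Finset.card_le_card hQ
  omega

theorem card_sub_two_le_of_erase {S : Finset α} {K : Finset ι} {p q q' : α} {k : ι}
    (hcov : Covers S K T) (hp : p ∈ S) (hk : k ∈ K) (hqq' : ¬ IsInnerPair (S \ {p}) q q')
    (hfree : ∀ x ∈ S, ∀ y ∈ S, x ≠ p → y ≠ p → x < y → T k x y → x = q ∧ y = q')
    (ih : ∀ S' ⊂ S, ∀ K : Finset ι, Covers S' K T → S'.card - 2 ≤ K.card) :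
    S.card - 2 ≤ K.card := by
  refine card_sub_two_le_of_sdiff hcov (Finset.singleton_subset_iff.2 hp)
    (Finset.singleton_nonempty p) (Finset.singleton_subset_iff.2 hk) le_rfl ?_ ih
  simp only [Finset.mem_singleton, Finset.mem_sdiff]
  rintro _ rfl x ⟨hx, hxp⟩ y ⟨hy, hyp⟩ hxy hin hT
  obtain ⟨rfl, rfl⟩ := hfree x hx y hy hxp hyp hxy hT
  exact hqq' hin

namespace Corners

variable {S : Finset α} {a b c d : α} {K : Finset ι}

theorem card_sub_two_le_of_meets_top (hC : Corners S a b c d) (hcov : Covers S K T) {p : α}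
    {k : ι} (hp : p = a ∨ p = b) (hk : k ∈ K) (hc : Meets (T k) S p c) (hd : Meets (T k) S p d)
    (ih : ∀ S' ⊂ S, ∀ K : Finset ι, Covers S' K T → S'.card - 2 ≤ K.card) :
    S.card - 2 ≤ K.card := by
  have hpS : p ∈ S := by rcases hp with rfl | rfl; exacts [hC.a_mem, hC.b_mem]
  refine card_sub_two_le_of_erase hcov hpS hk (hC.not_isInnerPair_top Finset.sdiff_subset)
    (fun x hx y hy hxp hyp hxy hT => ?_) ih
  have := hc x hx y hy hxy hT; have := hd x hx y hy hxy hT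
  have := hC.le_d y hy; have := hC.c_lt_d
  grind

theorem card_sub_two_le_of_meets_bot (hC : Corners S a b c d) (hcov : Covers S K T) {p : α}
    {k : ι} (hp : p = c ∨ p = d) (hk : k ∈ K) (ha : Meets (T k) S a p) (hb : Meets (T k) S b p)
    (ih : ∀ S' ⊂ S, ∀ K : Finset ι, Covers S' K T → S'.card - 2 ≤ K.card) :
    S.card - 2 ≤ K.card := by
  have hpS : p ∈ S := by rcases hp with rfl | rfl; exacts [hC.c_mem, hC.d_mem]
  refine card_sub_two_le_of_erase hcov hpS hk (hC.not_isInnerPair_bot Finset.sdiff_subset)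
    (fun x hx y hy hxp hyp hxy hT => ?_) ih
  have := ha x hx y hy hxy hT; have := hb x hx y hy hxy hT
  have := hC.a_le x hx; have := hC.a_lt_b
  grind

theorem card_sub_two_le_of_ne (hC : Corners S a b c d) (hcov : Covers S K T) {k₁ k₂ k₃ k₄ : ι}
    (hk₁ : k₁ ∈ K) (hk₂ : k₂ ∈ K) (hk₃ : k₃ ∈ K) (hk₄ : k₄ ∈ K) (h₁₂ : k₁ ≠ k₂) (h₁₃ : k₁ ≠ k₃)
    (h₂₄ : k₂ ≠ k₄) (h₃₄ : k₃ ≠ k₄) (t₃ : T k₃ a c) (t₄ : T k₄ b c)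
    (M₁ : Meets (T k₁) S a d) (M₂ : Meets (T k₂) S b d) (M₃ : Meets (T k₃) S a c)
    (M₄ : Meets (T k₄) S b c)
    (ih : ∀ S' ⊂ S, ∀ K : Finset ι, Covers S' K T → S'.card - 2 ≤ K.card) :
    S.card - 2 ≤ K.card := by
  have := hC.a_lt_b; have := hC.b_lt_c; have := hC.c_lt_d
  have h₁₄ : k₁ ≠ k₄ := by
    rintro rfl
    have := M₁ b hC.b_mem c hC.c_mem hC.b_lt_c t₄
    grind
  have h₂₃ : k₂ ≠ k₃ := by
    rintro rfl
    have := M₂ a hC.a_mem c hC.c_mem (by order) t₃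
    grind
  refine card_sub_two_le_of_sdiff (P := {a, b, c, d}) (Q := {k₁, k₂, k₃, k₄}) hcov
    (by simp [Finset.insert_subset_iff, hC.a_mem, hC.b_mem, hC.c_mem, hC.d_mem])
    (Finset.insert_nonempty _ _) (by simp [Finset.insert_subset_iff, *]) ?_ ?_ ih
  · rw [Finset.card_eq_four.2 ⟨k₁, k₂, k₃, k₄, h₁₂, h₁₃, h₁₄, h₂₃, h₂₄, h₃₄, rfl⟩]
    exact Finset.card_le_four
  · simp only [Finset.mem_insert, Finset.mem_singleton, Finset.mem_sdiff, not_or]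
    rintro k hk x ⟨hx, hxa, hxb, hxc, hxd⟩ y ⟨hy, hya, hyb, hyc, hyd⟩ hxy - hT
    rcases hk with rfl | rfl | rfl | rfl
    · have := M₁ x hx y hy hxy hT; tauto
    · have := M₂ x hx y hy hxy hT; tauto
    · have := M₃ x hx y hy hxy hT; tauto
    · have := M₄ x hx y hy hxy hT; tauto

end Corners

theorem card_sub_two_le_card_of_covers (hT : ∀ k, IntervalSeparated (T k)) (S : Finset α) :
    ∀ K : Finset ι, Covers S K T → S.card - 2 ≤ K.card := by
  induction S using Finset.strongInduction with
  | H S ih =>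
  intro K hcov
  rcases lt_or_ge S.card 4 with hS | hS
  · rcases lt_or_ge S.card 3 with hS3 | hS3
    · omega
    obtain ⟨x, hx, y, hy, hxy, hin⟩ := exists_isInnerPair hS3
    obtain ⟨k, hk, -⟩ := hcov x hx y hy hxy hin
    have := Finset.card_pos.2 ⟨k, hk⟩
    omega
  obtain ⟨a, b, c, d, hC⟩ := exists_corners hS
  obtain ⟨k₁, hk₁, -, M₁⟩ := hC.exists_meets hT hcov (.inl rfl) (.inr rfl)
  obtain ⟨k₂, hk₂, -, M₂⟩ := hC.exists_meets hT hcov (.inr rfl) (.inr rfl)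
  obtain ⟨k₃, hk₃, t₃, M₃⟩ := hC.exists_meets hT hcov (.inl rfl) (.inl rfl)
  obtain ⟨k₄, hk₄, t₄, M₄⟩ := hC.exists_meets hT hcov (.inr rfl) (.inl rfl)
  by_cases h₁₃ : k₁ = k₃
  · exact hC.card_sub_two_le_of_meets_top hcov (.inl rfl) hk₁ (h₁₃ ▸ M₃) M₁ ih
  by_cases h₂₄ : k₂ = k₄
  · exact hC.card_sub_two_le_of_meets_top hcov (.inr rfl) hk₂ (h₂₄ ▸ M₄) M₂ ih
  by_cases h₁₂ : k₁ = k₂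
  · exact hC.card_sub_two_le_of_meets_bot hcov (.inr rfl) hk₁ M₁ (h₁₂ ▸ M₂) ih
  by_cases h₃₄ : k₃ = k₄
  · exact hC.card_sub_two_le_of_meets_bot hcov (.inl rfl) hk₃ M₃ (h₃₄ ▸ M₄) ih
  exact hC.card_sub_two_le_of_ne hcov hk₁ hk₂ hk₃ hk₄ h₁₂ h₁₃ h₂₄ h₃₄ t₃ t₄ M₁ M₂ M₃ M₄ ih

end StarTreeRank

open StarTreeRank

theorem minMatrix_comm (n : ℕ) (i j : Fin n) : minMatrix n i j = minMatrix n j i := by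
  simp only [minMatrix, min_comm]

theorem minMatrix_of_lt {n : ℕ} {i j : Fin n} (h : i < j) : minMatrix n i j = (i : ℕ) + 1 := by
  rw [minMatrix, min_eq_left (by omega)]
  push_cast; rfl

theorem starRankLe_of_forall_lt {n r : ℕ} {M : Fin n → Fin n → ℝ} (hM : ∀ i j, M i j = M j i)
    (v : Fin r → Fin n → ℝ)
    (h : ∀ i j, i < j → (∀ k, M i j ≤ v k i + v k j) ∧ ∃ k, M i j = v k i + v k j) :
    StarRankLe r M := by
  refine ⟨v, fun i j hij => ?_⟩
  rcases hij.lt_or_gt with hlt | hlt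
  · exact h i j hlt
  · simpa only [hM j i, add_comm (v _ j)] using h j i hlt

/-- The `k`-th star tree is tight exactly on the pairs `{k, j}` with `k < j` and on the top pair
`{n - 2, n - 1}`, so `k < n - 2` gives a decomposition of `minMatrix n`. -/
noncomputable def fan (n k i : ℕ) : ℝ :=
  if i < k then n else if i = k then k + 1 - (n - 1) / 2 else (n - 1) / 2

theorem le_fan_add_fan {n k i j : ℕ} (hij : i < j) (hjn : j < n) :
    (i : ℝ) + 1 ≤ fan n k i + fan n k j := by
  have hij' : (i : ℝ) + 1 ≤ j := by exact_mod_cast hij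
  have hjn' : (j : ℝ) + 1 ≤ n := by exact_mod_cast hjn
  rcases lt_trichotomy i k with hik | rfl | hki
  · have hik' : (i : ℝ) + 1 ≤ k := by exact_mod_cast hik
    unfold fan; split_ifs <;> linarith
  · simp only [fan, lt_irrefl, if_false, if_true, show ¬ j < i by omega, show j ≠ i by omega]
    linarith
  · simp only [fan, show ¬ i < k by omega, show i ≠ k by omega, show ¬ j < k by omega,
      show j ≠ k by omega, if_false]
    linarith

theorem fan_add_fan_of_lt {n k j : ℕ} (hkj : k < j) : fan n k k + fan n k j = k + 1 := by
  simp only [fan, lt_irrefl, if_false, if_true, show ¬ j < k by omega, show j ≠ k by omega]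
  ring

theorem fan_add_fan_top {n k : ℕ} (hk : k < n - 2) :
    fan n k (n - 2) + fan n k (n - 1) = ((n - 2 : ℕ) : ℝ) + 1 := by
  simp only [fan, show ¬ n - 2 < k by omega, show n - 2 ≠ k by omega, show ¬ n - 1 < k by omega,
    show n - 1 ≠ k by omega, if_false]
  rw [Nat.cast_sub (by omega)]
  ring

theorem starRankLe_minMatrix {n : ℕ} (hn : 3 ≤ n) : StarRankLe (n - 2) (minMatrix n) := by
  refine starRankLe_of_forall_lt (minMatrix_comm n) (fun k i => fan n k i) fun i j hij => ?_
  rw [minMatrix_of_lt hij]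
  refine ⟨fun k => le_fan_add_fan hij j.isLt, ?_⟩
  by_cases hi : (i : ℕ) < n - 2
  · exact ⟨⟨i, hi⟩, (fan_add_fan_of_lt hij).symm⟩
  · obtain ⟨hi, hj⟩ : (i : ℕ) = n - 2 ∧ (j : ℕ) = n - 1 := by omega
    refine ⟨⟨n - 3, by omega⟩, ?_⟩
    simp only [hi, hj]
    exact (fan_add_fan_top (by omega)).symm

theorem sub_two_le_of_starRankLe_minMatrix {n r : ℕ} (h : StarRankLe r (minMatrix n)) :
    n - 2 ≤ r := by
  obtain ⟨v, hv⟩ := h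
  have hf : StrictMono fun i : Fin n => ((i : ℕ) : ℝ) + 1 := fun i j hij => by
    simpa using hij
  have hfeas : ∀ k, ∀ x y : Fin n, x < y → ((x : ℕ) : ℝ) + 1 ≤ v k x + v k y := fun k x y hxy => by
    rw [← minMatrix_of_lt hxy]
    exact (hv x y hxy.ne).1 k
  have hcov : Covers Finset.univ Finset.univ fun k x y => v k x + v k y = ((x : ℕ) : ℝ) + 1 := by
    intro x _ y _ hxy _
    obtain ⟨k, hk⟩ := (hv x y hxy.ne).2
    exact ⟨k, Finset.mem_univ k, (minMatrix_of_lt hxy).symm.trans hk |>.symm⟩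
  simpa using
    card_sub_two_le_card_of_covers (fun k => intervalSeparated_tight hf (hfeas k)) _ _ hcov

theorem stmt8 (n : ℕ) (hn : 3 ≤ n) :
    StarRankLe (n - 2) (minMatrix n) ∧
    ∀ r : ℕ, StarRankLe r (minMatrix n) → n - 2 ≤ r :=
  ⟨starRankLe_minMatrix hn, fun _ => sub_two_le_of_starRankLe_minMatrix⟩
end

section
/- Let M be a 0/1 dissimilarity matrix on [n] and G_M the graph with an edge {i,j} whenever M_{ij} = 0. If r is the minimum number of subgraphs in a cover of the edges of G_M where each subgraph is either a clique or a star (a vertex joined to a set of other vertices), then the star tree rank of M is either r or r+1. -/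
/-- A clique-or-star subgraph of the zero-graph of `M`: either a clique
(a finite set of vertices, pairwise joined by zero entries) or a star
(a center `c` together with a set of leaves joined to `c` by zero entries). -/
def IsCliqueOrStar {n : ℕ} (M : Fin n → Fin n → ℝ) :
    Finset (Fin n) ⊕ (Fin n × Finset (Fin n)) → Prop
  | Sum.inl S => ∀ i ∈ S, ∀ j ∈ S, i ≠ j → M i j = 0
  | Sum.inr (c, L) => ∀ i ∈ L, i ≠ c ∧ M c i = 0

/-- The edge `{i,j}` is covered by the given clique or star. -/
def EdgeCovered {n : ℕ} (i j : Fin n) :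
    Finset (Fin n) ⊕ (Fin n × Finset (Fin n)) → Prop
  | Sum.inl S => i ∈ S ∧ j ∈ S
  | Sum.inr (c, L) => (i = c ∧ j ∈ L) ∨ (j = c ∧ i ∈ L)

/-- A cover of all edges of the zero-graph of `M` by `r` cliques and stars. -/
def IsCliqueStarCover {n : ℕ} (M : Fin n → Fin n → ℝ) (r : ℕ)
    (f : Fin r → Finset (Fin n) ⊕ (Fin n × Finset (Fin n))) : Prop :=
  (∀ k, IsCliqueOrStar M (f k)) ∧
  (∀ i j : Fin n, i ≠ j → M i j = 0 → ∃ k, EdgeCovered i j (f k))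

/-- The vector associated to a clique or star. -/
noncomputable def csVec {n : ℕ} (x : Finset (Fin n) ⊕ (Fin n × Finset (Fin n))) :
    Fin n → ℝ :=
  match x with
  | Sum.inl S => fun i => if i ∈ S then 0 else 1
  | Sum.inr (c, L) => fun i => if i = c then -1 else if i ∈ L then 1 else 2

lemma csVec_lb {n : ℕ} (M : Fin n → Fin n → ℝ)
    (hsym : ∀ i j, M i j = M j i)
    (h01 : ∀ i j : Fin n, i ≠ j → M i j = 0 ∨ M i j = 1)
    (x : Finset (Fin n) ⊕ (Fin n × Finset (Fin n)))
    (hx : IsCliqueOrStar M x) (i j : Fin n) (hij : i ≠ j) :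
    M i j ≤ csVec x i + csVec x j := by
  rcases h01 i j hij with h0 | h1
  · -- M i j = 0, suffices sum ≥ 0
    rw [h0]
    rcases x with S | ⟨c, L⟩
    · simp only [csVec]
      split <;> split <;> norm_num
    · simp only [csVec]
      -- values in {-1,1,2}, and both can't be -1 since then i = c = j
      by_cases hi : i = c <;> by_cases hj : j = c
      · exact absurd (hi.trans hj.symm) hij
      · by_cases hjL : j ∈ L <;> simp [hi, hj, hjL] <;> norm_num
      · by_cases hiL : i ∈ L <;> simp [hi, hj, hiL] <;> norm_num
      · by_cases hiL : i ∈ L <;> by_cases hjL : j ∈ L <;>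
          simp [hi, hj, hiL, hjL] <;> norm_num
  · rw [h1]
    rcases x with S | ⟨c, L⟩
    · -- clique: i,j not both in S since M i j = 1 ≠ 0
      simp only [csVec, IsCliqueOrStar] at hx ⊢
      by_cases hi : i ∈ S <;> by_cases hj : j ∈ S
      · exact absurd (hx i hi j hj hij) (by rw [h1]; norm_num)
      · simp [hi, hj]
      · simp [hi, hj]
      · simp [hi, hj]
    · simp only [csVec, IsCliqueOrStar] at hx ⊢
      by_cases hi : i = c <;> by_cases hj : j = c
      · exact absurd (hi.trans hj.symm) hij
      · -- i = c; j ∉ L since M c j = 1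
        have hjL : j ∉ L := by
          intro hjL
          have := (hx j hjL).2
          rw [hi] at h1
          rw [h1] at this; norm_num at this
        simp [hi, hj, hjL]; norm_num
      · have hiL : i ∉ L := by
          intro hiL
          have := (hx i hiL).2
          rw [hsym c i, ← hj] at this
          rw [h1] at this; norm_num at this
        simp [hi, hj, hiL]; norm_num
      · by_cases hiL : i ∈ L <;> by_cases hjL : j ∈ L <;>
          simp [hi, hj, hiL, hjL] <;> norm_num

lemma csVec_cov {n : ℕ} (M : Fin n → Fin n → ℝ)
    (x : Finset (Fin n) ⊕ (Fin n × Finset (Fin n)))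
    (hx : IsCliqueOrStar M x) (i j : Fin n)
    (hc : EdgeCovered i j x) :
    csVec x i + csVec x j = 0 := by
  rcases x with S | ⟨c, L⟩
  · obtain ⟨hi, hj⟩ := hc
    simp [csVec, hi, hj]
  · simp only [IsCliqueOrStar] at hx
    rcases hc with ⟨hi, hj⟩ | ⟨hj, hi⟩
    · have hjc : j ≠ c := (hx j hj).1
      simp [csVec, hi, hjc, hj]
    · have hic : i ≠ c := (hx i hi).1
      simp [csVec, hj, hic, hi]

lemma Mnonneg {n : ℕ} (M : Fin n → Fin n → ℝ)
    (h01 : ∀ i j : Fin n, i ≠ j → M i j = 0 ∨ M i j = 1)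
    (i j : Fin n) (hij : i ≠ j) : 0 ≤ M i j := by
  rcases h01 i j hij with h | h <;> rw [h] <;> norm_num

theorem stmt10 (n : ℕ) (M : Fin n → Fin n → ℝ)
    (hsym : ∀ i j, M i j = M j i)
    (h01 : ∀ i j : Fin n, i ≠ j → M i j = 0 ∨ M i j = 1)
    (r : ℕ)
    (hcov : ∃ f : Fin r → Finset (Fin n) ⊕ (Fin n × Finset (Fin n)), IsCliqueStarCover M r f)
    (hmin : ∀ s : ℕ,
      (∃ f : Fin s → Finset (Fin n) ⊕ (Fin n × Finset (Fin n)), IsCliqueStarCover M s f) → r ≤ s) :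
    StarRankLe (r + 1) M ∧ ∀ s : ℕ, StarRankLe s M → r ≤ s := by
  classical
  constructor
  · -- upper bound
    obtain ⟨f, hcs, hcovE⟩ := hcov
    refine ⟨Fin.snoc (fun k => csVec (f k)) (fun _ => (1 : ℝ) / 2), ?_⟩
    intro i j hij
    constructor
    · intro k
      refine Fin.lastCases ?_ ?_ k
      · simp only [Fin.snoc_last]
        rcases h01 i j hij with h | h <;> rw [h] <;> norm_num
      · intro k'
        simp only [Fin.snoc_castSucc]
        exact csVec_lb M hsym h01 (f k') (hcs k') i j hij
    · rcases h01 i j hij with h0 | h1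
      · obtain ⟨k, hk⟩ := hcovE i j hij h0
        refine ⟨k.castSucc, ?_⟩
        simp only [Fin.snoc_castSucc]
        rw [h0, csVec_cov M (f k) (hcs k) i j hk]
      · exact ⟨Fin.last r, by simp [Fin.snoc_last, h1]; norm_num⟩
  · -- lower bound
    rintro s ⟨v, hd⟩
    refine hmin s ⟨fun k =>
      if h : ∃ c, v k c < 0 then
        Sum.inr (h.choose, Finset.univ.filter
          (fun j => j ≠ h.choose ∧ v k h.choose + v k j = 0))
      else Sum.inl (Finset.univ.filter (fun i => v k i = 0)), ?_, ?_⟩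
    · intro k
      by_cases h : ∃ c, v k c < 0
      · simp only [dif_pos h, IsCliqueOrStar]
        intro i hi
        simp only [Finset.mem_filter, Finset.mem_univ, true_and] at hi
        refine ⟨hi.1, ?_⟩
        have hne : h.choose ≠ i := fun he => hi.1 he.symm
        have hle : M h.choose i ≤ v k h.choose + v k i := (hd h.choose i hne).1 k
        rw [hi.2] at hle
        have := Mnonneg M h01 h.choose i hne
        linarith
      · simp only [dif_neg h, IsCliqueOrStar]
        intro i hi j hj hij
        simp only [Finset.mem_filter, Finset.mem_univ, true_and] at hi hj
        have hle : M i j ≤ v k i + v k j := (hd i j hij).1 k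
        rw [hi, hj] at hle
        have := Mnonneg M h01 i j hij
        linarith
    · intro i j hij hM
      obtain ⟨k, hk⟩ := (hd i j hij).2
      have hsum : v k i + v k j = 0 := by rw [hM] at hk; exact hk.symm
      refine ⟨k, ?_⟩
      by_cases h : ∃ c, v k c < 0
      · have hc := h.choose_spec
        set c := h.choose with hcdef
        -- any vertex other than c has nonneg value
        have hnn : ∀ x : Fin n, x ≠ c → 0 ≤ v k x := by
          intro x hx
          by_contra hneg
          push_neg at hneg
          have hne : x ≠ c := hx
          have hle : M x c ≤ v k x + v k c := (hd x c hne).1 k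
          have := Mnonneg M h01 x c hne
          linarith
        simp only [dif_pos h, EdgeCovered]
        by_cases hi : i = c
        · left
          refine ⟨hi, ?_⟩
          simp only [Finset.mem_filter, Finset.mem_univ, true_and]
          exact ⟨fun he => hij (hi.trans he.symm), by show v k c + v k j = 0; rw [← hi]; exact hsum⟩
        · by_cases hj : j = c
          · right
            refine ⟨hj, ?_⟩
            simp only [Finset.mem_filter, Finset.mem_univ, true_and]
            exact ⟨hi, by show v k c + v k i = 0; rw [← hj]; linarith⟩
          · exfalso
            have h1 := hnn i hi
            have h2 := hnn j hj
            have hvi : v k i = 0 := by linarith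
            have hle : M i c ≤ v k i + v k c := (hd i c hi).1 k
            have := Mnonneg M h01 i c hi
            linarith
      · push_neg at h
        simp only [dif_neg (not_exists.mpr (fun c hc => absurd hc (not_lt.mpr (h c)))), EdgeCovered]
        have hvi : v k i = 0 := le_antisymm (by have := h j; linarith) (h i)
        have hvj : v k j = 0 := by linarith
        simp [Finset.mem_filter, hvi, hvj]
end

section
/- If a star tree matrix D_{ij} = v_i + v_j (i ≠ j) has all entries nonnegative, then the graph on [n] whose edges are the pairs {i,j} with D_{ij} = 0 is either a complete graph or a star: either v has no negative entry and the zero edges form a clique on {i : v_i = 0}, or v has exactly one negative entry −a and the zero edges join that vertex to the vertices with v_i = a. -/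
theorem stmt11 (n : ℕ) (hn : 2 ≤ n) (v : Fin n → ℝ) (D : Fin n → Fin n → ℝ)
    (hD : ∀ i j : Fin n, i ≠ j → D i j = v i + v j)
    (hnonneg : ∀ i j : Fin n, i ≠ j → 0 ≤ D i j) :
    -- clique case: no negative entry of `v`, and the zero edges form a clique
    -- on the vertices with `v i = 0`
    ((∀ i, 0 ≤ v i) ∧
      ∀ i j : Fin n, i ≠ j → (D i j = 0 ↔ v i = 0 ∧ v j = 0)) ∨
    -- star case: exactly one negative entry `v c = -a`, and the zero edges
    -- join `c` to the vertices with `v i = a`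
    (∃ (c : Fin n) (a : ℝ), 0 < a ∧ v c = -a ∧ (∀ i, i ≠ c → 0 ≤ v i) ∧
      ∀ i j : Fin n, i ≠ j →
        (D i j = 0 ↔ (i = c ∧ v j = a) ∨ (j = c ∧ v i = a))) := by
  by_cases hpos : ∀ i, 0 ≤ v i
  · left
    refine ⟨hpos, fun i j hij => ?_⟩
    rw [hD i j hij]
    constructor
    · intro h
      constructor <;> nlinarith [hpos i, hpos j]
    · rintro ⟨h1, h2⟩; rw [h1, h2]; ring
  · right
    push_neg at hpos
    obtain ⟨c, hc⟩ := hpos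
    refine ⟨c, -v c, by linarith, by ring, ?_, ?_⟩
    · intro i hic
      have := (hnonneg i c hic); rw [hD i c hic] at this; linarith
    · intro i j hij
      rw [hD i j hij]
      constructor
      · intro h
        by_cases hicase : i = c
        · left; refine ⟨hicase, by rw [hicase] at h; linarith⟩
        · by_cases hjcase : j = c
          · right; refine ⟨hjcase, by rw [hjcase] at h; linarith⟩
          · exfalso
            have hi := hnonneg i c hicase; rw [hD i c hicase] at hi
            have hj := hnonneg j c hjcase; rw [hD j c hjcase] at hj
            linarith
      · rintro (⟨h1, h2⟩ | ⟨h1, h2⟩) <;> rw [h1] at * <;> linarith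
end

section
/- If n ≥ R(k,k) (the diagonal Ramsey number), then every n×n 0/1 dissimilarity matrix has star tree rank at most n − k + 1. -/
/-- The diagonal Ramsey number `R(k,k)`: the least `N` such that every simple
graph on `N` vertices contains a clique of size `k` or an independent set of
size `k`. -/
noncomputable def ramsey (k : ℕ) : ℕ :=
  sInf {N : ℕ | ∀ G : SimpleGraph (Fin N),
    (∃ S : Finset (Fin N), G.IsNClique k S) ∨ (∃ S : Finset (Fin N), Gᶜ.IsNClique k S)}

/-!
The zero pattern of `M` is a graph on `n ≥ R(k,k)` vertices, so it has a clique or an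
independent set `S` of size `k`; either way `M` is constant, say `d`, on the pairs inside `S`.
The star tree equal to `d / 2` on `S` and large outside it gives these entries, and for each of
the `n - k` vertices `t ∉ S` the star tree centred at `t` (`-B` at `t`, `M t i + B` elsewhere,
`B` large) gives row `t` of `M` and dominates all other entries. These `n - k + 1` stars form a
solid cover of the zero graph.
-/

open Finset

namespace SimpleGraph

variable {V W : Type*}

lemma comap_compl (f : V ↪ W) (G : SimpleGraph W) : Gᶜ.comap f = (G.comap f)ᶜ := by
  ext a b
  simp [f.injective.ne_iff]

lemma IsNClique.of_comap {f : V ↪ W} {G : SimpleGraph W} {k : ℕ} {s : Finset V}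
    (h : (G.comap f).IsNClique k s) : G.IsNClique k (s.map f) :=
  h.map.mono (map_comap_le f G)

end SimpleGraph

open SimpleGraph

def IsRamseyBound (N k l : ℕ) : Prop :=
  ∀ (V : Type) [Fintype V], N ≤ Fintype.card V → ∀ G : SimpleGraph V,
    (∃ s : Finset V, G.IsNClique k s) ∨ ∃ s : Finset V, Gᶜ.IsNClique l s

namespace IsRamseyBound

variable {N k l : ℕ}

lemma symm (h : IsRamseyBound N k l) : IsRamseyBound N l k := fun V _ hV G => by
  simpa only [compl_compl, or_comm] using h V hV Gᶜ

lemma of_fin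
    (h : ∀ G : SimpleGraph (Fin N), (∃ s, G.IsNClique k s) ∨ ∃ s, Gᶜ.IsNClique l s) :
    IsRamseyBound N k l := by
  intro V _ hV G
  obtain ⟨f⟩ : Nonempty (Fin N ↪ V) :=
    Function.Embedding.nonempty_of_card_le (by rwa [Fintype.card_fin])
  rcases h (G.comap f) with ⟨s, hs⟩ | ⟨s, hs⟩
  · exact Or.inl ⟨s.map f, hs.of_comap⟩
  · rw [← comap_compl] at hs
    exact Or.inr ⟨s.map f, hs.of_comap⟩

lemma exists_isNClique_succ_or {V : Type} [DecidableEq V] (h : IsRamseyBound N k l)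
    (G : SimpleGraph V) (v : V) [Fintype (G.neighborSet v)] (hv : N ≤ G.degree v) :
    (∃ s : Finset V, G.IsNClique (k + 1) s) ∨ ∃ s : Finset V, Gᶜ.IsNClique l s := by
  let f := Function.Embedding.subtype (· ∈ G.neighborSet v)
  rcases h (G.neighborSet v) (by rwa [card_neighborSet_eq_degree]) (G.comap f) with
    ⟨s, hs⟩ | ⟨s, hs⟩
  · refine Or.inl ⟨insert v (s.map f), hs.of_comap.insert ?_⟩
    simp only [mem_map, forall_exists_index, and_imp, forall_apply_eq_imp_iff₂]
    exact fun w _ => w.2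
  · rw [← comap_compl] at hs
    exact Or.inr ⟨s.map f, hs.of_comap⟩

lemma succ_succ {a b : ℕ} (ha : IsRamseyBound a k (l + 1)) (hb : IsRamseyBound b (k + 1) l) :
    IsRamseyBound (a + b + 1) (k + 1) (l + 1) := by
  classical
  intro V _ hV G
  obtain ⟨v⟩ : Nonempty V := Fintype.card_pos_iff.mp (by omega)
  -- `v` has at least `a` neighbours or at least `b` non-neighbours
  have hdeg := G.degree_compl v
  by_cases hva : a ≤ G.degree v
  · exact ha.exists_isNClique_succ_or G v hva
  · simpa only [compl_compl, or_comm] using hb.symm.exists_isNClique_succ_or Gᶜ v (by omega)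

end IsRamseyBound

theorem exists_isRamseyBound (k l : ℕ) : ∃ N, IsRamseyBound N k l := by
  induction k generalizing l with
  | zero => exact ⟨0, fun _ _ _ _ => Or.inl ⟨∅, by simp⟩⟩
  | succ k ihk =>
    induction l with
    | zero => exact ⟨0, fun _ _ _ _ => Or.inr ⟨∅, by simp⟩⟩
    | succ l ihl =>
      obtain ⟨a, ha⟩ := ihk (l + 1)
      obtain ⟨b, hb⟩ := ihl
      exact ⟨a + b + 1, ha.succ_succ hb⟩

lemma isRamseyBound_of_ramsey_le {k n : ℕ} (hn : ramsey k ≤ n) : IsRamseyBound n k k := by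
  obtain ⟨N, hN⟩ := exists_isRamseyBound k k
  refine fun V _ hV => IsRamseyBound.of_fin ?_ V (hn.trans hV)
  exact Nat.sInf_mem (s := {N | ∀ G : SimpleGraph (Fin N), _}) ⟨N, hN (Fin N) (by simp)⟩

lemma starRankLe_of_fintype {n : ℕ} {ι : Type*} [Fintype ι] {M : Fin n → Fin n → ℝ}
    (v : ι → Fin n → ℝ)
    (hle : ∀ i j, i ≠ j → ∀ x, M i j ≤ v x i + v x j)
    (heq : ∀ i j, i ≠ j → ∃ x, M i j = v x i + v x j) :
    StarRankLe (Fintype.card ι) M := by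
  refine ⟨fun m => v ((Fintype.equivFin ι).symm m),
    fun i j hij => ⟨fun m => hle i j hij _, ?_⟩⟩
  obtain ⟨x, hx⟩ := heq i j hij
  exact ⟨Fintype.equivFin ι x, by simpa using hx⟩

section CenteredStar

variable {α : Type*} [DecidableEq α] (M : α → α → ℝ) (B : ℝ) (t : α)

def centeredStar (i : α) : ℝ := if i = t then -B else M t i + B

variable {M B t}

lemma centeredStar_self_add {j : α} (hj : j ≠ t) :
    centeredStar M B t t + centeredStar M B t j = M t j := by
  simp [centeredStar, hj]

lemma le_centeredStar_add (hsym : ∀ i j, M i j = M j i) (hB : ∀ i j, |M i j| ≤ B)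
    {i j : α} (hij : i ≠ j) :
    M i j ≤ centeredStar M (2 * B) t i + centeredStar M (2 * B) t j := by
  by_cases hi : i = t
  · subst hi; rw [centeredStar_self_add hij.symm]
  by_cases hj : j = t
  · subst hj; rw [add_comm, centeredStar_self_add hi, hsym]
  simp only [centeredStar, hi, hj, if_false]
  have := abs_le.mp (hB t i); have := abs_le.mp (hB t j); have := abs_le.mp (hB i j)
  linarith

end CenteredStar

theorem starRankLe_of_const_on {n : ℕ} {M : Fin n → Fin n → ℝ}
    (hsym : ∀ i j, M i j = M j i) (S : Finset (Fin n)) (d : ℝ)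
    (hS : ∀ i ∈ S, ∀ j ∈ S, i ≠ j → M i j = d) :
    StarRankLe (#Sᶜ + 1) M := by
  classical
  obtain ⟨B, hB⟩ := (Set.finite_range fun p : Fin n × Fin n => |M p.1 p.2|).bddAbove
  replace hB : ∀ i j, |M i j| ≤ B := fun i j => hB ⟨(i, j), rfl⟩
  let v : Option (Sᶜ : Finset (Fin n)) → Fin n → ℝ
    | none => fun i => if i ∈ S then d / 2 else |d| + B
    | some t => centeredStar M (2 * B) t
  have hcard : Fintype.card (Option (Sᶜ : Finset (Fin n))) = #Sᶜ + 1 := by simp [card_compl]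
  rw [← hcard]
  refine starRankLe_of_fintype v (fun i j hij x => ?_) (fun i j hij => ?_)
  · rcases x with _ | t
    · have := abs_le.mp (hB i j); have := abs_nonneg d; have := le_abs_self d
      have := neg_abs_le d
      by_cases hi : i ∈ S <;> by_cases hj : j ∈ S <;> simp only [v, hi, hj, if_true, if_false]
      · rw [hS i hi j hj hij]; linarith
      all_goals linarith
    · exact le_centeredStar_add hsym hB hij
  · by_cases hi : i ∈ S
    · by_cases hj : j ∈ S
      · exact ⟨none, by simp only [v, hi, hj, if_true, hS i hi j hj hij]; ring⟩
      · refine ⟨some ⟨j, mem_compl.mpr hj⟩, ?_⟩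
        simp only [v]; rw [add_comm, centeredStar_self_add hij, hsym]
    · exact ⟨some ⟨i, mem_compl.mpr hi⟩, (centeredStar_self_add hij.symm).symm⟩

theorem stmt12 (k n : ℕ) (hn : ramsey k ≤ n) (M : Fin n → Fin n → ℝ)
    (hsym : ∀ i j, M i j = M j i)
    (h01 : ∀ i j : Fin n, i ≠ j → M i j = 0 ∨ M i j = 1) :
    StarRankLe (n - k + 1) M := by
  classical
  let G := SimpleGraph.fromRel fun i j : Fin n => M i j = 0
  have hconst :
      ∃ S : Finset (Fin n), #S = k ∧ ∃ d, ∀ i ∈ S, ∀ j ∈ S, i ≠ j → M i j = d := by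
    rcases isRamseyBound_of_ramsey_le hn (Fin n) (by simp) G with ⟨S, hS⟩ | ⟨S, hS⟩
    · refine ⟨S, hS.card_eq, 0, fun i hi j hj hij => ?_⟩
      simpa [G, hij, hsym j i] using hS.isClique hi hj hij
    · refine ⟨S, hS.card_eq, 1, fun i hi j hj hij => ?_⟩
      have := hS.isClique hi hj hij
      simp only [G, compl_adj, fromRel_adj] at this
      exact (h01 i j hij).resolve_left fun h => this.2 ⟨hij, Or.inl h⟩
  obtain ⟨S, hSk, d, hS⟩ := hconst
  simpa [card_compl, hSk] using starRankLe_of_const_on hsym S d hS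
end

section
/- Suppose D is a nonnegative tree matrix on [n] (satisfying the tropical Plücker/four-point condition: for every i<j<k<l, the minimum of D_{ij}+D_{kl}, D_{ik}+D_{jl}, D_{il}+D_{jk} is attained at least twice). Then among vertices incident to at least one zero entry, the relation 'D_{ij} > 0' is transitive: the graph with edges {i,j : D_{ij}=0} restricted to non-isolated vertices is a complete multipartite graph. -/
theorem stmt13 (n : ℕ) (D : Fin n → Fin n → ℝ)
    (hsym : ∀ i j, D i j = D j i)
    (hnonneg : ∀ i j : Fin n, i ≠ j → 0 ≤ D i j)
    (hfour : ∀ i j k l : Fin n, i ≠ j → i ≠ k → i ≠ l → j ≠ k → j ≠ l → k ≠ l →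
      (D i j + D k l = D i k + D j l ∧ D i j + D k l ≤ D i l + D j k) ∨
      (D i j + D k l = D i l + D j k ∧ D i j + D k l ≤ D i k + D j l) ∨
      (D i k + D j l = D i l + D j k ∧ D i k + D j l ≤ D i j + D k l)) :
    -- among vertices incident to at least one zero entry, non-adjacency
    -- (`D _ _ > 0`) is transitive
    ∀ i j k : Fin n, i ≠ j → j ≠ k → i ≠ k →
      (∃ l, l ≠ i ∧ D i l = 0) → (∃ l, l ≠ j ∧ D j l = 0) → (∃ l, l ≠ k ∧ D k l = 0) →
      0 < D i j → 0 < D j k → 0 < D i k := by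
  intro i j k hij hjk hik _ hjz _ hDij hDjk
  by_contra h
  push_neg at h
  have hik0 : D i k = 0 := le_antisymm h (hnonneg i k hik)
  obtain ⟨l, hlj, hjl⟩ := hjz
  have hli : l ≠ i := by
    rintro rfl
    rw [hsym] at hjl
    exact absurd hjl (ne_of_gt hDij)
  have hlk : l ≠ k := by
    rintro rfl
    exact absurd hjl (ne_of_gt hDjk)
  have h4 := hfour i j k l hij hik hli.symm hjk hlj.symm hlk.symm
  have h1 : 0 ≤ D i j := hnonneg i j hij
  have h2 : 0 ≤ D k l := hnonneg k l (Ne.symm hlk)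
  have h3 : 0 ≤ D i l := hnonneg i l (Ne.symm hli)
  have h5 : 0 ≤ D j k := hnonneg j k hjk
  rcases h4 with ⟨he, _⟩ | ⟨_, hle⟩ | ⟨he, _⟩ <;> nlinarith
end

section
/- Let M be a 0/1 dissimilarity matrix on [n] whose zero-graph G_M has at most one isolated vertex, and let r be the minimum number of complete multipartite subgraphs needed to cover all edges of G_M. Then the tree rank of M equals r. If G_M has at least two isolated vertices, the tree rank equals r+1. -/
set_option maxHeartbeats 1000000

/-- A tree matrix: a symmetric dissimilarity matrix satisfying the four-point
condition (the minimum of the three Plücker pairwise sums is attained at least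
twice for every quadruple of distinct indices). -/
def TreeMatrix {n : ℕ} (D : Fin n → Fin n → ℝ) : Prop :=
  (∀ i j, D i j = D j i) ∧
  ∀ i j k l : Fin n, i ≠ j → i ≠ k → i ≠ l → j ≠ k → j ≠ l → k ≠ l →
    (D i j + D k l = D i k + D j l ∧ D i j + D k l ≤ D i l + D j k) ∨
    (D i j + D k l = D i l + D j k ∧ D i j + D k l ≤ D i k + D j l) ∨
    (D i k + D j l = D i l + D j k ∧ D i k + D j l ≤ D i j + D k l)

/-- The dissimilarity matrix `M` has tree rank at most `r`. -/
def TreeRankLe {n : ℕ} (r : ℕ) (M : Fin n → Fin n → ℝ) : Prop :=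
  ∃ T : Fin r → Fin n → Fin n → ℝ, (∀ k, TreeMatrix (T k)) ∧ DissMinDecomp M (fun k => T k)

/-- A cover of all edges of the zero-graph of `M` by `r` complete multipartite
subgraphs; the `t`-th subgraph is given by pairwise disjoint parts
`I t 0, …, I t (p t - 1)` with edges between distinct parts. -/
def IsMultipartiteCover {n : ℕ} (M : Fin n → Fin n → ℝ) (r : ℕ)
    (p : Fin r → ℕ) (I : (t : Fin r) → Fin (p t) → Finset (Fin n)) : Prop :=
  (∀ t, ∀ a b : Fin (p t), a ≠ b → Disjoint (I t a) (I t b)) ∧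
  -- each part-pair consists of edges of the zero-graph
  (∀ t, ∀ a b : Fin (p t), a ≠ b → ∀ i ∈ I t a, ∀ j ∈ I t b, M i j = 0) ∧
  -- every edge of the zero-graph is covered
  (∀ i j : Fin n, i ≠ j → M i j = 0 →
    ∃ (t : Fin r) (a b : Fin (p t)), a ≠ b ∧ i ∈ I t a ∧ j ∈ I t b)

/-- `i` is an isolated vertex of the zero-graph of `M`. -/
def IsIsolated {n : ℕ} (M : Fin n → Fin n → ℝ) (i : Fin n) : Prop :=
  ∀ j : Fin n, j ≠ i → M i j ≠ 0

lemma plucker_aux {n : ℕ} (P : Fin n → Fin n → Prop) [∀ x y, Decidable (P x y)]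
    (hs : ∀ x y, P x y → P y x)
    (ht : ∀ x y z, P x y → P y z → P x z) (h : Fin n → ℝ) :
    TreeMatrix (fun x y => h x + h y + (if P x y then (1:ℝ) else 0)) := by
  constructor
  · intro i j
    dsimp only
    by_cases hP : P i j
    · rw [if_pos hP, if_pos (hs _ _ hP)]; ring
    · rw [if_neg hP, if_neg (fun h' => hP (hs _ _ h'))]; ring
  · intro i j k l _ _ _ _ _ _
    dsimp only
    have t1 : P i j → P i k → P j k := fun a b => ht _ _ _ (hs _ _ a) b
    have t2 : P i j → P i l → P j l := fun a b => ht _ _ _ (hs _ _ a) b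
    have t3 : P i j → P j k → P i k := fun a b => ht _ _ _ a b
    have t4 : P i j → P j l → P i l := fun a b => ht _ _ _ a b
    have t5 : P i k → P i l → P k l := fun a b => ht _ _ _ (hs _ _ a) b
    have t6 : P i k → P j k → P i j := fun a b => ht _ _ _ a (hs _ _ b)
    have t7 : P i k → P k l → P i l := fun a b => ht _ _ _ a b
    have t8 : P j l → P i l → P i j := fun a b => hs _ _ (ht _ _ _ a (hs _ _ b))
    have t9 : P j l → P j k → P k l := fun a b => ht _ _ _ (hs _ _ b) a
    have t10 : P j l → P k l → P j k := fun a b => ht _ _ _ a (hs _ _ b)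
    have t11 : P i l → P k l → P i k := fun a b => ht _ _ _ a (hs _ _ b)
    have t12 : P j k → P k l → P j l := fun a b => ht _ _ _ a b
    by_cases h1 : P i j <;> by_cases h2 : P k l <;> by_cases h3 : P i k <;>
      by_cases h4 : P j l <;> by_cases h5 : P i l <;> by_cases h6 : P j k <;>
      simp only [h1, h2, h3, h4, h5, h6, ite_true, ite_false] <;>
      first
        | exact absurd (t1 h1 h3) h6
        | exact absurd (t2 h1 h5) h4
        | exact absurd (t3 h1 h6) h3
        | exact absurd (t4 h1 h4) h5
        | exact absurd (t5 h3 h5) h2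
        | exact absurd (t6 h3 h6) h1
        | exact absurd (t7 h3 h2) h5
        | exact absurd (t8 h4 h5) h1
        | exact absurd (t9 h4 h6) h2
        | exact absurd (t10 h4 h2) h6
        | exact absurd (t11 h5 h2) h3
        | exact absurd (t12 h6 h2) h4
        | (left; constructor <;> linarith)
        | (right; left; constructor <;> linarith)
        | (right; right; constructor <;> linarith)

open Classical in
/-- A single complete multipartite subgraph of the zero-graph of `M` gives a tree
matrix dominating `M` with prescribed zeros and ones. -/
lemma tree_of_graph {n : ℕ} (M : Fin n → Fin n → ℝ)
    (h01 : ∀ i j : Fin n, i ≠ j → M i j = 0 ∨ M i j = 1)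
    (q : ℕ) (J : Fin q → Finset (Fin n))
    (hd : ∀ a b : Fin q, a ≠ b → Disjoint (J a) (J b))
    (hz : ∀ a b : Fin q, a ≠ b → ∀ i ∈ J a, ∀ j ∈ J b, M i j = 0) :
    ∃ T : Fin n → Fin n → ℝ, TreeMatrix T ∧
      (∀ i j : Fin n, i ≠ j → M i j ≤ T i j) ∧
      (∀ i j : Fin n, ∀ a b : Fin q, a ≠ b → i ∈ J a → j ∈ J b → T i j = 0) ∧
      (∀ i j : Fin n, i ≠ j → M i j = 1 →
        ((∃ a, i ∈ J a) ∨ (∃ a, j ∈ J a)) → T i j = 1) := by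
  set P : Fin n → Fin n → Prop := fun x y => ∃ a, x ∈ J a ∧ y ∈ J a with hP
  have hsP : ∀ x y, P x y → P y x := by rintro x y ⟨a, h1, h2⟩; exact ⟨a, h2, h1⟩
  have htP : ∀ x y z, P x y → P y z → P x z := by
    rintro x y z ⟨a, hxa, hya⟩ ⟨b, hyb, hzb⟩
    have hab : a = b := by
      by_contra hab
      exact Finset.disjoint_left.mp (hd a b hab) hya hyb
    exact ⟨a, hxa, hab ▸ hzb⟩
  set hgt : Fin n → ℝ := fun x => if ∃ a, x ∈ J a then 0 else 1 with hh
  refine ⟨fun x y => hgt x + hgt y + (if P x y then (1:ℝ) else 0),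
    plucker_aux P hsP htP hgt, ?_, ?_, ?_⟩
  · -- M ≤ T
    intro i j hij
    have hT0 : (0:ℝ) ≤ hgt i + hgt j + (if P i j then (1:ℝ) else 0) := by
      simp only [hh]
      split_ifs <;> norm_num
    rcases h01 i j hij with hM | hM
    · rw [hM]; exact hT0
    · rw [hM]
      by_cases hci : ∃ a, i ∈ J a
      · by_cases hcj : ∃ a, j ∈ J a
        · by_cases hPij : P i j
          · simp only [hh, if_pos hci, if_pos hcj, if_pos hPij]; norm_num
          · exfalso
            obtain ⟨a, ha⟩ := hci
            obtain ⟨b, hb⟩ := hcj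
            have hab : a ≠ b := fun h => hPij ⟨a, ha, h ▸ hb⟩
            have := hz a b hab i ha j hb
            rw [hM] at this; norm_num at this
        · have hPij : ¬ P i j := fun ⟨a, _, hja⟩ => hcj ⟨a, hja⟩
          simp only [hh, if_pos hci, if_neg hcj, if_neg hPij]; norm_num
      · have hPij : ¬ P i j := fun ⟨a, hia, _⟩ => hci ⟨a, hia⟩
        by_cases hcj : ∃ a, j ∈ J a
        · simp only [hh, if_neg hci, if_pos hcj, if_neg hPij]; norm_num
        · simp only [hh, if_neg hci, if_neg hcj, if_neg hPij]; norm_num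
  · -- zeros between distinct parts
    intro i j a b hab hia hjb
    have hci : ∃ a, i ∈ J a := ⟨a, hia⟩
    have hcj : ∃ a, j ∈ J a := ⟨b, hjb⟩
    have hPij : ¬ P i j := by
      rintro ⟨c, hic, hjc⟩
      have hac : a = c := by
        by_contra h
        exact Finset.disjoint_left.mp (hd a c h) hia hic
      have hbc : b = c := by
        by_contra h
        exact Finset.disjoint_left.mp (hd b c h) hjb hjc
      exact hab (hac.trans hbc.symm)
    simp only [hh, if_pos hci, if_pos hcj, if_neg hPij]; norm_num
  · -- ones at covered non-edges
    intro i j hij hM hcov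
    rcases hcov with hci | hcj
    · by_cases hcj : ∃ a, j ∈ J a
      · have hPij : P i j := by
          by_contra hPij
          obtain ⟨a, ha⟩ := hci
          obtain ⟨b, hb⟩ := hcj
          have hab : a ≠ b := fun h => hPij ⟨a, ha, h ▸ hb⟩
          have := hz a b hab i ha j hb
          rw [hM] at this; norm_num at this
        simp only [hh, if_pos hci, if_pos hcj, if_pos hPij]; norm_num
      · have hPij : ¬ P i j := fun ⟨a, _, hja⟩ => hcj ⟨a, hja⟩
        simp only [hh, if_pos hci, if_neg hcj, if_neg hPij]; norm_num
    · by_cases hci : ∃ a, i ∈ J a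
      · have hPij : P i j := by
          by_contra hPij
          obtain ⟨a, ha⟩ := hci
          obtain ⟨b, hb⟩ := hcj
          have hab : a ≠ b := fun h => hPij ⟨a, ha, h ▸ hb⟩
          have := hz a b hab i ha j hb
          rw [hM] at this; norm_num at this
        simp only [hh, if_pos hci, if_pos hcj, if_pos hPij]; norm_num
      · have hPij : ¬ P i j := fun ⟨a, hia, _⟩ => hci ⟨a, hia⟩
        simp only [hh, if_neg hci, if_pos hcj, if_neg hPij]; norm_num

lemma ones_tm {n : ℕ} : TreeMatrix (fun _ _ : Fin n => (1:ℝ)) := by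
  constructor
  · intro _ _; rfl
  · intro _ _ _ _ _ _ _ _ _ _
    left; norm_num

/-- From a multipartite cover, pick out the family of tree matrices. -/
lemma trees_of_cover {n r : ℕ} (M : Fin n → Fin n → ℝ)
    (h01 : ∀ i j : Fin n, i ≠ j → M i j = 0 ∨ M i j = 1)
    (p : Fin r → ℕ) (I : (t : Fin r) → Fin (p t) → Finset (Fin n))
    (hc : IsMultipartiteCover M r p I) :
    ∃ T : Fin r → Fin n → Fin n → ℝ, (∀ t, TreeMatrix (T t)) ∧
      (∀ t, ∀ i j : Fin n, i ≠ j → M i j ≤ T t i j) ∧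
      (∀ t, ∀ i j : Fin n, ∀ a b : Fin (p t), a ≠ b → i ∈ I t a → j ∈ I t b → T t i j = 0) ∧
      (∀ t, ∀ i j : Fin n, i ≠ j → M i j = 1 →
        ((∃ a, i ∈ I t a) ∨ (∃ a, j ∈ I t a)) → T t i j = 1) := by
  obtain ⟨hd, hz, _⟩ := hc
  have h := fun t => tree_of_graph M h01 (p t) (I t) (hd t) (hz t)
  choose T hTM hge hzero hone using h
  exact ⟨T, hTM, hge, hzero, hone⟩

lemma upper_of_cover {n r : ℕ} (M : Fin n → Fin n → ℝ)
    (h01 : ∀ i j : Fin n, i ≠ j → M i j = 0 ∨ M i j = 1)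
    (p : Fin r → ℕ) (I : (t : Fin r) → Fin (p t) → Finset (Fin n))
    (hc : IsMultipartiteCover M r p I)
    (hone : ∀ i j : Fin n, i ≠ j → M i j = 1 →
      ∃ t : Fin r, (∃ a, i ∈ I t a) ∨ (∃ a, j ∈ I t a)) :
    TreeRankLe r M := by
  obtain ⟨T, hTM, hge, hzero, hone'⟩ := trees_of_cover M h01 p I hc
  refine ⟨T, hTM, ?_⟩
  intro i j hij
  refine ⟨fun k => hge k i j hij, ?_⟩
  rcases h01 i j hij with hM | hM
  · obtain ⟨t, a, b, hab, hia, hjb⟩ := hc.2.2 i j hij hM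
    exact ⟨t, by show M i j = T t i j; rw [hM, hzero t i j a b hab hia hjb]⟩
  · obtain ⟨t, hcov⟩ := hone i j hij hM
    exact ⟨t, by show M i j = T t i j; rw [hM, hone' t i j hij hM hcov]⟩

lemma upper_plus {n r : ℕ} (M : Fin n → Fin n → ℝ)
    (h01 : ∀ i j : Fin n, i ≠ j → M i j = 0 ∨ M i j = 1)
    (p : Fin r → ℕ) (I : (t : Fin r) → Fin (p t) → Finset (Fin n))
    (hc : IsMultipartiteCover M r p I) :
    TreeRankLe (r + 1) M := by
  obtain ⟨T, hTM, hge, hzero, _⟩ := trees_of_cover M h01 p I hc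
  refine ⟨fun k => if h : (k : ℕ) < r then T ⟨k, h⟩ else fun _ _ => (1:ℝ), ?_, ?_⟩
  · intro k
    dsimp only
    split
    · exact hTM _
    · exact ones_tm
  · intro i j hij
    constructor
    · intro k
      dsimp only
      split
      · exact hge _ i j hij
      · rcases h01 i j hij with hM | hM <;> rw [hM] <;> norm_num
    · rcases h01 i j hij with hM | hM
      · obtain ⟨t, a, b, hab, hia, hjb⟩ := hc.2.2 i j hij hM
        refine ⟨⟨(t : ℕ), Nat.lt_succ_of_lt t.isLt⟩, ?_⟩
        dsimp only
        have hlt : ((⟨(t : ℕ), Nat.lt_succ_of_lt t.isLt⟩ : Fin (r+1)) : ℕ) < r := t.isLt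
        rw [dif_pos hlt]
        have : (⟨((⟨(t : ℕ), Nat.lt_succ_of_lt t.isLt⟩ : Fin (r+1)) : ℕ), hlt⟩ : Fin r) = t := by
          apply Fin.ext; rfl
        rw [this, hM, hzero t i j a b hab hia hjb]
      · refine ⟨Fin.last r, ?_⟩
        dsimp only
        rw [dif_neg (by simp), hM]

lemma min'_eq_of_eq {α : Type*} [LinearOrder α] {s t : Finset α} (h : s = t)
    (hs : s.Nonempty) (ht : t.Nonempty) : s.min' hs = t.min' ht := by
  subst h; rfl

open Classical in
/-- The zero sets of a family of tree matrices dominating `M` give a multipartite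
cover of the zero-graph of `M`, provided every zero edge is witnessed. -/
lemma cover_of_trees {n : ℕ} (M : Fin n → Fin n → ℝ)
    (h01 : ∀ i j : Fin n, i ≠ j → M i j = 0 ∨ M i j = 1)
    (m : ℕ) (T : Fin m → Fin n → Fin n → ℝ)
    (hTM : ∀ k, TreeMatrix (T k))
    (hge : ∀ k, ∀ i j : Fin n, i ≠ j → M i j ≤ T k i j)
    (hex : ∀ i j : Fin n, i ≠ j → M i j = 0 → ∃ k, T k i j = 0) :
    ∃ (p : Fin m → ℕ) (I : (t : Fin m) → Fin (p t) → Finset (Fin n)),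
      IsMultipartiteCover M m p I := by
  have hnn : ∀ k, ∀ i j : Fin n, i ≠ j → 0 ≤ T k i j := by
    intro k i j hij
    refine le_trans ?_ (hge k i j hij)
    rcases h01 i j hij with h | h <;> rw [h] <;> norm_num
  -- support of the zero graph of tree k
  set inS : Fin m → Fin n → Prop := fun k i => ∃ j, j ≠ i ∧ T k i j = 0 with hinS
  -- key transitivity from the four-point condition
  have htr : ∀ k, ∀ i j l : Fin n, i ≠ j → j ≠ l → i ≠ l → inS k j →
      T k i j ≠ 0 → T k j l ≠ 0 → T k i l ≠ 0 := by
    intro k i j l hij hjl hil hjS hTij hTjl hTil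
    obtain ⟨w, hwj, hw0⟩ := hjS
    have hsymT := (hTM k).1
    have hwi : w ≠ i := fun h => hTij ((hsymT i j).trans (h ▸ hw0))
    have hwl : w ≠ l := fun h => hTjl (h ▸ hw0)
    have h4 := (hTM k).2 i l j w hil hij hwi.symm (Ne.symm hjl) hwl.symm (Ne.symm hwj)
    have e1 : T k l j = T k j l := hsymT l j
    have e2 : T k l w = T k w l := hsymT l w
    have hTijpos : 0 < T k i j := lt_of_le_of_ne (hnn k i j hij) (Ne.symm hTij)
    have hTjlpos : 0 < T k j l := lt_of_le_of_ne (hnn k j l hjl) (Ne.symm hTjl)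
    have hTlw : 0 ≤ T k l w := hnn k l w (Ne.symm hwl)
    have hTiw : 0 ≤ T k i w := hnn k i w (Ne.symm hwi)
    have hjw : T k j w = 0 := hw0
    rcases h4 with ⟨h, _⟩ | ⟨h, _⟩ | ⟨_, h⟩ <;> linarith
  -- the relation "same part"
  set Rel : Fin m → Fin n → Fin n → Prop := fun k i j => i = j ∨ T k i j ≠ 0 with hRel
  have hRsym : ∀ k, ∀ i j : Fin n, Rel k i j → Rel k j i := by
    rintro k i j (rfl | h)
    · exact Or.inl rfl
    · exact Or.inr (by rw [(hTM k).1 j i]; exact h)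
  have hRtr : ∀ k, ∀ i j l : Fin n, inS k j → Rel k i j → Rel k j l → Rel k i l := by
    intro k i j l hjS h1 h2
    by_cases hij : i = j
    · exact hij ▸ h2
    by_cases hjl : j = l
    · exact hjl ▸ h1
    by_cases hil : i = l
    · exact Or.inl hil
    have hTij : T k i j ≠ 0 := h1.resolve_left hij
    have hTjl : T k j l ≠ 0 := h2.resolve_left hjl
    exact Or.inr (htr k i j l hij hjl hil hjS hTij hTjl)
  -- classes and representatives
  set cls : Fin m → Fin n → Finset (Fin n) :=
    fun k i => Finset.univ.filter (fun x => inS k x ∧ Rel k i x) with hcls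
  set rep : Fin m → Fin n → Fin n :=
    fun k i => if h : (cls k i).Nonempty then (cls k i).min' h else i with hrep
  have hmem_cls : ∀ k, ∀ i : Fin n, inS k i → i ∈ cls k i := by
    intro k i hi
    simp only [hcls, Finset.mem_filter, Finset.mem_univ, true_and]
    exact ⟨hi, Or.inl rfl⟩
  have hrep_spec : ∀ k, ∀ i : Fin n, inS k i → inS k (rep k i) ∧ Rel k i (rep k i) := by
    intro k i hi
    have hne : (cls k i).Nonempty := ⟨i, hmem_cls k i hi⟩
    have : rep k i ∈ cls k i := by
      simp only [hrep, dif_pos hne]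
      exact (cls k i).min'_mem hne
    simpa only [hcls, Finset.mem_filter, Finset.mem_univ, true_and] using this
  have hcls_eq : ∀ k, ∀ i j : Fin n, inS k i → inS k j → Rel k i j → cls k i = cls k j := by
    intro k i j hiS hjS hR
    ext x
    simp only [hcls, Finset.mem_filter, Finset.mem_univ, true_and]
    constructor
    · rintro ⟨hxS, hRix⟩
      exact ⟨hxS, hRtr k j i x hiS (hRsym k i j hR) hRix⟩
    · rintro ⟨hxS, hRjx⟩
      exact ⟨hxS, hRtr k i j x hjS hR hRjx⟩
  have hrep_eq : ∀ k, ∀ i j : Fin n, inS k i → inS k j → Rel k i j → rep k i = rep k j := by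
    intro k i j hiS hjS hR
    have hne1 : (cls k i).Nonempty := ⟨i, hmem_cls k i hiS⟩
    have hne2 : (cls k j).Nonempty := ⟨j, hmem_cls k j hjS⟩
    simp only [hrep, dif_pos hne1, dif_pos hne2]
    exact min'_eq_of_eq (hcls_eq k i j hiS hjS hR) hne1 hne2
  have hrep_rel : ∀ k, ∀ i j : Fin n, inS k i → inS k j → rep k i = rep k j → Rel k i j := by
    intro k i j hiS hjS he
    obtain ⟨hS1, hR1⟩ := hrep_spec k i hiS
    obtain ⟨hS2, hR2⟩ := hrep_spec k j hjS
    rw [he] at hR1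
    exact hRtr k i (rep k j) j hS2 hR1 (hRsym k j (rep k j) hR2)
  -- assemble the cover
  refine ⟨fun _ => n, fun k a => Finset.univ.filter (fun i => inS k i ∧ rep k i = a),
    ?_, ?_, ?_⟩
  · intro t a b hab
    rw [Finset.disjoint_left]
    intro x hx hx'
    simp only [Finset.mem_filter, Finset.mem_univ, true_and] at hx hx'
    exact hab (hx.2 ▸ hx'.2 ▸ rfl)
  · intro t a b hab i hi j hj
    simp only [Finset.mem_filter, Finset.mem_univ, true_and] at hi hj
    obtain ⟨hiS, hia⟩ := hi
    obtain ⟨hjS, hjb⟩ := hj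
    have hij : i ≠ j := by
      rintro rfl
      exact hab (hia ▸ hjb ▸ rfl)
    have hnR : ¬ Rel t i j := by
      intro hR
      exact hab (hia ▸ hjb ▸ hrep_eq t i j hiS hjS hR)
    have hT0 : T t i j = 0 := by
      by_contra h
      exact hnR (Or.inr h)
    have := hge t i j hij
    rw [hT0] at this
    rcases h01 i j hij with h | h
    · exact h
    · exfalso; rw [h] at this; linarith
  · intro i j hij hM0
    obtain ⟨k, hk⟩ := hex i j hij hM0
    have hiS : inS k i := ⟨j, Ne.symm hij, hk⟩
    have hjS : inS k j := ⟨i, hij, by rw [(hTM k).1 j i]; exact hk⟩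
    have hab : rep k i ≠ rep k j := by
      intro he
      rcases hrep_rel k i j hiS hjS he with h | h
      · exact hij h
      · exact h hk
    exact ⟨k, rep k i, rep k j, hab,
      Finset.mem_filter.mpr ⟨Finset.mem_univ _, hiS, rfl⟩,
      Finset.mem_filter.mpr ⟨Finset.mem_univ _, hjS, rfl⟩⟩

/-- A tree matrix dominating `M` that attains the value `1` between two isolated
vertices of the zero-graph has no off-diagonal zeros. -/
lemma iso_tree_nozero {n : ℕ} (M : Fin n → Fin n → ℝ)
    (hsym : ∀ i j, M i j = M j i)
    (h01 : ∀ i j : Fin n, i ≠ j → M i j = 0 ∨ M i j = 1)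
    (u v : Fin n) (huv : u ≠ v) (hu : IsIsolated M u) (hv : IsIsolated M v)
    (T : Fin n → Fin n → ℝ) (hTM : TreeMatrix T)
    (hge : ∀ i j : Fin n, i ≠ j → M i j ≤ T i j) (heq : T u v = 1) :
    ∀ i j : Fin n, i ≠ j → T i j ≠ 0 := by
  have hMu : ∀ x : Fin n, x ≠ u → M u x = 1 := fun x hx =>
    (h01 u x (Ne.symm hx)).resolve_left (hu x hx)
  have hMv : ∀ x : Fin n, x ≠ v → M v x = 1 := fun x hx =>
    (h01 v x (Ne.symm hx)).resolve_left (hv x hx)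
  intro i j hij h0
  by_cases hiu : i = u
  · subst hiu
    have h1 := hge i j hij
    rw [hMu j (Ne.symm hij), h0] at h1; linarith
  by_cases hju : j = u
  · subst hju
    have h1 := hge i j hij
    rw [hsym i j, hMu i hiu, h0] at h1; linarith
  by_cases hiv : i = v
  · subst hiv
    have h1 := hge i j hij
    rw [hMv j (Ne.symm hij), h0] at h1; linarith
  by_cases hjv : j = v
  · subst hjv
    have h1 := hge i j hij
    rw [hsym i j, hMv i hiv, h0] at h1; linarith
  -- now u, v, i, j are pairwise distinct
  have h4 := hTM.2 u v i j huv (fun h => hiu h.symm) (fun h => hju h.symm)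
    (fun h => hiv h.symm) (fun h => hjv h.symm) hij
  have b1 : 1 ≤ T u i := by
    have := hge u i (fun h => hiu h.symm); rw [hMu i hiu] at this; linarith
  have b2 : 1 ≤ T u j := by
    have := hge u j (fun h => hju h.symm); rw [hMu j hju] at this; linarith
  have b3 : 1 ≤ T v i := by
    have := hge v i (fun h => hiv h.symm); rw [hMv i hiv] at this; linarith
  have b4 : 1 ≤ T v j := by
    have := hge v j (fun h => hjv h.symm); rw [hMv j hjv] at this; linarith
  rcases h4 with ⟨h, _⟩ | ⟨h, _⟩ | ⟨_, h⟩ <;> rw [heq, h0] at * <;> linarith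

theorem stmt14 (n : ℕ) (M : Fin n → Fin n → ℝ)
    (hsym : ∀ i j, M i j = M j i)
    (h01 : ∀ i j : Fin n, i ≠ j → M i j = 0 ∨ M i j = 1)
    (r : ℕ)
    (hcov : ∃ (p : Fin r → ℕ) (I : (t : Fin r) → Fin (p t) → Finset (Fin n)),
      IsMultipartiteCover M r p I)
    (hmin : ∀ s : ℕ,
      (∃ (p : Fin s → ℕ) (I : (t : Fin s) → Fin (p t) → Finset (Fin n)),
        IsMultipartiteCover M s p I) → r ≤ s) :
    ((∀ i j : Fin n, IsIsolated M i → IsIsolated M j → i = j) →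
      (TreeRankLe r M ∧ ∀ s : ℕ, TreeRankLe s M → r ≤ s)) ∧
    ((∃ i j : Fin n, i ≠ j ∧ IsIsolated M i ∧ IsIsolated M j) →
      (TreeRankLe (r + 1) M ∧ ∀ s : ℕ, TreeRankLe s M → r + 1 ≤ s)) := by
  obtain ⟨p, I, hc⟩ := hcov
  have lower : ∀ s : ℕ, TreeRankLe s M → r ≤ s := by
    intro s ⟨T, hTM, hdec⟩
    apply hmin s
    apply cover_of_trees M h01 s T hTM
    · intro k i j hij; exact (hdec i j hij).1 k
    · intro i j hij h0
      obtain ⟨k, hk⟩ := (hdec i j hij).2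
      dsimp only at hk
      exact ⟨k, by rw [← hk, h0]⟩
  constructor
  · intro hiso
    refine ⟨?_, lower⟩
    apply upper_of_cover M h01 p I hc
    intro i j hij hM1
    by_cases hIi : IsIsolated M i
    · have hIj : ¬ IsIsolated M j := fun h => hij (hiso i j hIi h)
      unfold IsIsolated at hIj
      push_neg at hIj
      obtain ⟨x, hxj, hx0⟩ := hIj
      obtain ⟨t, a, b, hab, hja, hxb⟩ := hc.2.2 j x (Ne.symm hxj) hx0
      exact ⟨t, Or.inr ⟨a, hja⟩⟩
    · unfold IsIsolated at hIi
      push_neg at hIi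
      obtain ⟨x, hxi, hx0⟩ := hIi
      obtain ⟨t, a, b, hab, hia, hxb⟩ := hc.2.2 i x (Ne.symm hxi) hx0
      exact ⟨t, Or.inl ⟨a, hia⟩⟩
  · rintro ⟨u, v, huv, hu, hv⟩
    refine ⟨upper_plus M h01 p I hc, ?_⟩
    intro s hs
    obtain ⟨T, hTM, hdec⟩ := hs
    have hMuv : M u v = 1 := (h01 u v huv).resolve_left (hu v (Ne.symm huv))
    obtain ⟨k0, hk0⟩ := (hdec u v huv).2
    dsimp only at hk0
    have heq : T k0 u v = 1 := by rw [← hk0, hMuv]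
    have hz := iso_tree_nozero M hsym h01 u v huv hu hv (T k0) (hTM k0)
      (fun i j h => (hdec i j h).1 k0) heq
    cases s with
    | zero => exact k0.elim0
    | succ s' =>
      have hcov' : ∃ (p : Fin s' → ℕ) (I : (t : Fin s') → Fin (p t) → Finset (Fin n)),
          IsMultipartiteCover M s' p I := by
        apply cover_of_trees M h01 s' (fun t => T (k0.succAbove t))
          (fun t => hTM _) (fun t i j h => (hdec i j h).1 _)
        intro i j hij h0
        obtain ⟨k, hk⟩ := (hdec i j hij).2
        dsimp only at hk
        have hTk : T k i j = 0 := by rw [← hk, h0]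
        have hkne : k ≠ k0 := by
          rintro rfl
          exact hz i j hij hTk
        obtain ⟨t, ht⟩ := Fin.exists_succAbove_eq hkne
        exact ⟨t, by rw [ht]; exact hTk⟩
      have := hmin s' hcov'
      omega
end

section
/- Let M be an n×n dissimilarity matrix and suppose some (n−m)×(n−m) principal submatrix of M has tree rank r. Then M has tree rank at most r + m. -/
/-!
Each tree of a decomposition of the principal submatrix is extended to all of `[n]` so that
every entry in a row or column of a new index is huge: send all new indices to one old index,
replace the diagonal by a large constant (which keeps the four-point condition even for repeated
indices) and add a large star on the new indices. For each of the `m` new indices `c`, the star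
matrix `v x + v y` with `v c = -C` and `v x = M c x + C` reproduces row `c` of `M` and dominates
`M` elsewhere once `C` is large. Together these `r + m` trees have entrywise minimum `M`.
-/

open Function

section FourPoint

variable {α : Type*}

def MinAttainedTwice (a b c : ℝ) : Prop :=
  (a = b ∧ a ≤ c) ∨ (a = c ∧ a ≤ b) ∨ (b = c ∧ b ≤ a)

lemma MinAttainedTwice.add_const {a b c : ℝ} (h : MinAttainedTwice a b c) (s : ℝ) :
    MinAttainedTwice (a + s) (b + s) (c + s) := by
  rcases h with ⟨h₁, h₂⟩ | ⟨h₁, h₂⟩ | ⟨h₁, h₂⟩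
  · exact Or.inl ⟨by rw [h₁], by linarith⟩
  · exact Or.inr (Or.inl ⟨by rw [h₁], by linarith⟩)
  · exact Or.inr (Or.inr ⟨by rw [h₁], by linarith⟩)

/-- The four-point condition of `TreeMatrix` at a single quadruple, which need not be distinct. -/
def FourPoint (D : α → α → ℝ) (i j k l : α) : Prop :=
  MinAttainedTwice (D i j + D k l) (D i k + D j l) (D i l + D j k)

lemma FourPoint.add_star {D : α → α → ℝ} {i j k l : α} (h : FourPoint D i j k l)
    (w : α → ℝ) : FourPoint (fun x y => D x y + (w x + w y)) i j k l := by
  unfold FourPoint at *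
  convert h.add_const (w i + w j + w k + w l) using 1 <;> ring

/-- When two indices coincide, one Plücker sum contains a diagonal entry and the other two
agree, so a large diagonal makes the condition hold. -/
lemma fourPoint_of_not_pairwise_ne {D : α → α → ℝ} (hsymm : ∀ a b, D a b = D b a)
    (hdiag : ∀ a b c, D a b + D a c ≤ D a a + D b c) {i j k l : α}
    (h : i = j ∨ i = k ∨ i = l ∨ j = k ∨ j = l ∨ k = l) : FourPoint D i j k l := by
  unfold FourPoint MinAttainedTwice
  rcases h with rfl | rfl | rfl | rfl | rfl | rfl
  · exact Or.inr (Or.inr ⟨add_comm _ _, by linarith [hdiag i k l]⟩)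
  · exact Or.inr (Or.inl ⟨by rw [hsymm j i, add_comm], by linarith [hdiag i j l, hsymm j i]⟩)
  · exact Or.inl ⟨by rw [hsymm k i, hsymm j i, add_comm], by linarith [hdiag i j k, hsymm k i]⟩
  · exact Or.inl ⟨rfl, by linarith [hdiag j i l, hsymm i j]⟩
  · exact Or.inr (Or.inl ⟨by rw [hsymm k j], by linarith [hdiag j i k, hsymm i j, hsymm k j]⟩)
  · exact Or.inr (Or.inr ⟨rfl, by linarith [hdiag k i j, hsymm i k, hsymm j k]⟩)

variable [DecidableEq α]

def setDiag (t : α → α → ℝ) (K : ℝ) : α → α → ℝ :=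
  fun a b => if a = b then K else t a b

lemma setDiag_symm {t : α → α → ℝ} (hsymm : ∀ a b, t a b = t b a) (K : ℝ) (a b : α) :
    setDiag t K a b = setDiag t K b a := by
  simp only [setDiag, eq_comm (a := a), hsymm a b]

lemma setDiag_add_le {t : α → α → ℝ} (hsymm : ∀ a b, t a b = t b a) {A : ℝ}
    (hA : ∀ a b, |t a b| ≤ A) (a b c : α) :
    setDiag t (3 * A) a b + setDiag t (3 * A) a c ≤
      setDiag t (3 * A) a a + setDiag t (3 * A) b c := by
  have hA₀ : 0 ≤ A := (abs_nonneg _).trans (hA a a)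
  have hab := abs_le.mp (hA a b)
  have hac := abs_le.mp (hA a c)
  have hbc := abs_le.mp (hA b c)
  have hba := hsymm b a
  unfold setDiag
  split_ifs <;> subst_vars <;> first | contradiction | linarith

lemma neg_le_setDiag {t : α → α → ℝ} {A : ℝ} (hA : ∀ a b, |t a b| ≤ A) (a b : α) :
    -A ≤ setDiag t (3 * A) a b := by
  have hA₀ : 0 ≤ A := (abs_nonneg _).trans (hA a a)
  unfold setDiag
  split_ifs
  · linarith
  · exact (abs_le.mp (hA a b)).1

end FourPoint

lemma treeMatrix_star {n : ℕ} (v : Fin n → ℝ) : TreeMatrix (fun x y => v x + v y) :=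
  ⟨fun _ _ => add_comm _ _, fun _ _ _ _ _ _ _ _ _ _ => Or.inl ⟨by ring, by linarith⟩⟩

lemma TreeMatrix.fourPoint_setDiag {q : ℕ} {t : Fin q → Fin q → ℝ} (ht : TreeMatrix t)
    {A : ℝ} (hA : ∀ a b, |t a b| ≤ A) (a b c d : Fin q) :
    FourPoint (setDiag t (3 * A)) a b c d := by
  by_cases h : a = b ∨ a = c ∨ a = d ∨ b = c ∨ b = d ∨ c = d
  · exact fourPoint_of_not_pairwise_ne (setDiag_symm ht.1 _) (setDiag_add_le ht.1 hA) h
  · push Not at h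
    obtain ⟨hab, hac, had, hbc, hbd, hcd⟩ := h
    simpa only [FourPoint, MinAttainedTwice, setDiag, if_neg hab, if_neg hac, if_neg had, if_neg hbc, if_neg hbd,
      if_neg hcd] using ht.2 a b c d hab hac had hbc hbd hcd

/-- New indices are all sent to one old index, where the diagonal has been made large; a large
star on the new indices then pushes their entries above `B`. -/
lemma TreeMatrix.exists_extension {q n : ℕ} {t : Fin q → Fin q → ℝ} (ht : TreeMatrix t)
    {e : Fin q → Fin n} (he : Injective e) (B : ℝ) :
    ∃ T : Fin n → Fin n → ℝ, TreeMatrix T ∧ (∀ a b, a ≠ b → T (e a) (e b) = t a b) ∧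
      ∀ x y, x ∉ Set.range e ∨ y ∉ Set.range e → B ≤ T x y := by
  classical
  rcases isEmpty_or_nonempty (Fin q) with hq | hq
  · exact ⟨fun _ _ => B / 2 + B / 2, treeMatrix_star _, fun a => isEmptyElim a,
      fun _ _ _ => by linarith⟩
  obtain ⟨A, hA⟩ := Finite.exists_le (fun p : Fin q × Fin q => |t p.1 p.2|)
  replace hA : ∀ a b, |t a b| ≤ A := fun a b => hA (a, b)
  set w : Fin n → ℝ := fun x => if x ∈ Set.range e then 0 else A + |B|
  have hw : ∀ x, 0 ≤ w x := fun x => by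
    have := (abs_nonneg _).trans (hA hq.some hq.some)
    unfold w; split_ifs <;> positivity
  refine ⟨fun x y => setDiag t (3 * A) (invFun e x) (invFun e y) + (w x + w y),
    ⟨fun x y => ?_, fun x y z u _ _ _ _ _ _ => ?_⟩, fun a b hab => ?_, fun x y hxy => ?_⟩
  · dsimp only
    rw [setDiag_symm ht.1, add_comm (w x)]
  · exact FourPoint.add_star (D := fun x y => setDiag t (3 * A) (invFun e x) (invFun e y))
      (ht.fourPoint_setDiag hA _ _ _ _) w
  · simp [w, leftInverse_invFun he _, setDiag, hab]
  · have := neg_le_setDiag hA (invFun e x) (invFun e y)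
    have := le_abs_self B
    rcases hxy with hx | hy
    · linarith [hw y, show w x = A + |B| from if_neg hx]
    · linarith [hw x, show w y = A + |B| from if_neg hy]

lemma exists_treeMatrix_row_eq {n : ℕ} (M : Fin n → Fin n → ℝ) (hsym : ∀ i j, M i j = M j i)
    (c : Fin n) : ∃ S : Fin n → Fin n → ℝ, TreeMatrix S ∧ (∀ y, y ≠ c → S c y = M c y) ∧
      ∀ x y, x ≠ y → M x y ≤ S x y := by
  obtain ⟨A, hA⟩ := Finite.exists_le (fun p : Fin n × Fin n => |M p.1 p.2|)
  replace hA : ∀ a b, |M a b| ≤ A := fun a b => hA (a, b)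
  set v : Fin n → ℝ := fun z => if z = c then -(2 * A) else M c z + 2 * A
  refine ⟨fun x y => v x + v y, treeMatrix_star v, fun y hy => ?_, fun x y hxy => ?_⟩
  · simp only [v, if_pos rfl, if_neg hy]
    ring
  · have hcx := abs_le.mp (hA c x)
    have hcy := abs_le.mp (hA c y)
    have hxy' := abs_le.mp (hA x y)
    have := hsym x c
    simp only [v]
    split_ifs <;> subst_vars <;> first | exact absurd rfl hxy | linarith

lemma exists_fin_cover_compl_range {n m : ℕ} (hmn : m ≤ n) {e : Fin (n - m) → Fin n}
    (he : Injective e) : ∃ σ : Fin m → Fin n, ∀ x, x ∉ Set.range e → x ∈ Set.range σ := by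
  classical
  have hcard : (Finset.univ.image e)ᶜ.card = m := by
    rw [Finset.card_compl, Finset.card_image_of_injective _ he]
    simp only [Finset.card_univ, Fintype.card_fin]
    omega
  refine ⟨(Finset.univ.image e)ᶜ.orderEmbOfFin hcard, fun x hx => ?_⟩
  rw [Finset.range_orderEmbOfFin]
  simpa using hx

lemma treeRankLe_add {n r s : ℕ} {M : Fin n → Fin n → ℝ} (T : Fin r → Fin n → Fin n → ℝ)
    (S : Fin s → Fin n → Fin n → ℝ) (hT : ∀ k, TreeMatrix (T k)) (hS : ∀ k, TreeMatrix (S k))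
    (hTle : ∀ k i j, i ≠ j → M i j ≤ T k i j) (hSle : ∀ k i j, i ≠ j → M i j ≤ S k i j)
    (hattain : ∀ i j, i ≠ j → (∃ k, M i j = T k i j) ∨ ∃ k, M i j = S k i j) :
    TreeRankLe (r + s) M := by
  refine ⟨Fin.append T S, (Fin.forall_fin_add _).2 ⟨by simpa using hT, by simpa using hS⟩,
    fun i j hij => ⟨(Fin.forall_fin_add _).2 ⟨?_, ?_⟩, ?_⟩⟩
  · simpa using fun k => hTle k i j hij
  · simpa using fun k => hSle k i j hij
  · rcases hattain i j hij with ⟨k, hk⟩ | ⟨k, hk⟩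
    · exact ⟨Fin.castAdd s k, by simpa using hk⟩
    · exact ⟨Fin.natAdd r k, by simpa using hk⟩

theorem stmt16 (n m r : ℕ) (hmn : m ≤ n) (M : Fin n → Fin n → ℝ)
    (hsym : ∀ i j, M i j = M j i)
    (e : Fin (n - m) → Fin n) (he : Function.Injective e)
    (hsub : TreeRankLe r (fun a b => M (e a) (e b))) :
    TreeRankLe (r + m) M := by
  obtain ⟨T, hT, hdec⟩ := hsub
  obtain ⟨B, hB⟩ := Finite.exists_le (fun p : Fin n × Fin n => M p.1 p.2)
  choose Text hText hTe hTB using fun k => (hT k).exists_extension he B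
  obtain ⟨σ, hσ⟩ := exists_fin_cover_compl_range hmn he
  choose S hS hSrow hSle using fun j => exists_treeMatrix_row_eq M hsym (σ j)
  refine treeRankLe_add Text S hText hS (fun k x y hxy => ?_) hSle fun x y hxy => ?_
  · by_cases hxy' : x ∈ Set.range e ∧ y ∈ Set.range e
    · obtain ⟨⟨a, rfl⟩, ⟨b, rfl⟩⟩ := hxy'
      have hab : a ≠ b := ne_of_apply_ne e hxy
      exact hTe k a b hab ▸ (hdec a b hab).1 k
    · exact (hB (x, y)).trans (hTB k x y (not_and_or.mp hxy'))
  · by_cases hx : x ∈ Set.range e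
    · by_cases hy : y ∈ Set.range e
      · obtain ⟨⟨a, rfl⟩, ⟨b, rfl⟩⟩ := And.intro hx hy
        have hab : a ≠ b := ne_of_apply_ne e hxy
        obtain ⟨k, hk⟩ := (hdec a b hab).2
        exact Or.inl ⟨k, hk.trans (hTe k a b hab).symm⟩
      · obtain ⟨j, rfl⟩ := hσ y hy
        exact Or.inr ⟨j, by rw [(hS j).1, hSrow j x hxy, hsym]⟩
    · obtain ⟨j, rfl⟩ := hσ x hx
      exact Or.inr ⟨j, (hSrow j y hxy.symm).symm⟩
end

section
/- Let M be a 3×3 symmetric real matrix. Then M has symmetric Barvinok rank at most 2 if and only if M_{ii} + M_{jj} ≤ 2·M_{ij} for all 1 ≤ i,j ≤ 3 and M is tropically singular, i.e., the minimum over the six permutations σ of S_3 of M_{1σ(1)} + M_{2σ(2)} + M_{3σ(3)} is attained by at least two permutations. -/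
/-- A square matrix is tropically singular when the minimum in its tropical
determinant is attained by at least two permutations. -/
def TropSingular {n : ℕ} (M : Fin n → Fin n → ℝ) : Prop :=
  ∃ σ τ : Equiv.Perm (Fin n), σ ≠ τ ∧
    (∑ i, M i (σ i)) = (∑ i, M i (τ i)) ∧
    ∀ ρ : Equiv.Perm (Fin n), (∑ i, M i (σ i)) ≤ ∑ i, M i (ρ i)

lemma min_at_id (M : Fin 3 → Fin 3 → ℝ) (hsym : ∀ i j, M i j = M j i)
    (hd : ∀ i j, M i i + M j j ≤ 2 * M i j) (ρ : Equiv.Perm (Fin 3)) :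
    M 0 0 + M 1 1 + M 2 2 ≤ ∑ i, M i (ρ i) := by
  have key : ∀ a b c : Fin 3, a ≠ b → a ≠ c → b ≠ c →
      M 0 0 + M 1 1 + M 2 2 ≤ M 0 a + M 1 b + M 2 c := by
    intro a b c hab hac hbc
    fin_cases a <;> fin_cases b <;> fin_cases c <;> simp_all <;>
      linarith [hd 0 1, hd 0 2, hd 1 2, hsym 1 0, hsym 2 0, hsym 2 1]
  rw [Fin.sum_univ_three]
  exact key _ _ _ (ρ.injective.ne (by decide)) (ρ.injective.ne (by decide))
    (ρ.injective.ne (by decide))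

lemma key2 (M : Fin 3 → Fin 3 → ℝ) (hsym : ∀ i j, M i j = M j i)
    (hd : ∀ i j, M i i + M j j ≤ 2 * M i j) :
    ∀ a b c : Fin 3, a ≠ b → a ≠ c → b ≠ c → ¬(a = 0 ∧ b = 1 ∧ c = 2) →
      M 0 a + M 1 b + M 2 c = M 0 0 + M 1 1 + M 2 2 →
      ∃ i j : Fin 3, i ≠ j ∧ M i i + M j j = 2 * M i j := by
  intro a b c hab hac hbc hone hval
  fin_cases a <;> fin_cases b <;> fin_cases c <;> simp_all <;>
    first
    | exact ⟨0, 1, by decide, by linarith [hd 0 1, hd 0 2, hd 1 2, hsym 1 0, hsym 2 0, hsym 2 1]⟩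
    | exact ⟨0, 2, by decide, by linarith [hd 0 1, hd 0 2, hd 1 2, hsym 1 0, hsym 2 0, hsym 2 1]⟩
    | exact ⟨1, 2, by decide, by linarith [hd 0 1, hd 0 2, hd 1 2, hsym 1 0, hsym 2 0, hsym 2 1]⟩

lemma exists_eq_pair (M : Fin 3 → Fin 3 → ℝ) (hsym : ∀ i j, M i j = M j i)
    (hd : ∀ i j, M i i + M j j ≤ 2 * M i j) (hs : TropSingular M) :
    ∃ i j : Fin 3, i ≠ j ∧ M i i + M j j = 2 * M i j := by
  obtain ⟨σ, τ, hne, heq, hmin⟩ := hs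
  have hσval : (∑ i, M i (σ i)) = M 0 0 + M 1 1 + M 2 2 :=
    le_antisymm (by simpa [Fin.sum_univ_three] using hmin 1) (min_at_id M hsym hd σ)
  have key : ∀ ρ : Equiv.Perm (Fin 3), ρ ≠ 1 →
      (∑ i, M i (ρ i)) = M 0 0 + M 1 1 + M 2 2 →
      ∃ i j : Fin 3, i ≠ j ∧ M i i + M j j = 2 * M i j := by
    intro ρ hρ hval
    rw [Fin.sum_univ_three] at hval
    have hone : ¬ (ρ 0 = 0 ∧ ρ 1 = 1 ∧ ρ 2 = 2) := by
      rintro ⟨h0, h1, h2⟩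
      exact hρ (Equiv.ext fun x => by fin_cases x <;> simpa)
    exact key2 M hsym hd (ρ 0) (ρ 1) (ρ 2) (ρ.injective.ne (by decide))
      (ρ.injective.ne (by decide)) (ρ.injective.ne (by decide)) hone hval
  rcases eq_or_ne σ 1 with h | h
  · exact key τ (by rintro rfl; exact hne h) (by rw [← heq, hσval])
  · exact key σ h hσval

lemma singular_of_pair (M : Fin 3 → Fin 3 → ℝ) (hsym : ∀ i j, M i j = M j i)
    (hd : ∀ i j, M i i + M j j ≤ 2 * M i j) (i j : Fin 3) (hne : i ≠ j)
    (heq : M i i + M j j = 2 * M i j) : TropSingular M := by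
  have hmin : ∀ ρ : Equiv.Perm (Fin 3), (∑ x, M x ((1 : Equiv.Perm (Fin 3)) x)) ≤ ∑ x, M x (ρ x) := by
    intro ρ
    simpa [Fin.sum_univ_three] using min_at_id M hsym hd ρ
  fin_cases i <;> fin_cases j <;> simp_all <;>
    first
    | (refine ⟨1, Equiv.swap 0 1, by decide, ?_, hmin⟩;
        simp [Fin.sum_univ_three, Equiv.swap_apply_def] <;>
        linarith [hsym 1 0, hsym 2 0, hsym 2 1])
    | (refine ⟨1, Equiv.swap 0 2, by decide, ?_, hmin⟩;
        simp [Fin.sum_univ_three, Equiv.swap_apply_def] <;>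
        linarith [hsym 1 0, hsym 2 0, hsym 2 1])
    | (refine ⟨1, Equiv.swap 1 2, by decide, ?_, hmin⟩;
        simp [Fin.sum_univ_three, Equiv.swap_apply_def] <;>
        linarith [hsym 1 0, hsym 2 0, hsym 2 1])

lemma constr01 (M : Fin 3 → Fin 3 → ℝ) (hsym : ∀ i j, M i j = M j i)
    (hd : ∀ i j, M i i + M j j ≤ 2 * M i j)
    (heq : M 0 0 + M 1 1 = 2 * M 0 1) : SymRankLe 2 M := by
  set t : ℝ := max (M 0 2 - M 0 0 / 2) (max (M 1 2 - M 1 1 / 2) (M 2 2 / 2)) with ht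
  have ht1 : M 0 2 - M 0 0 / 2 ≤ t := le_max_left _ _
  have ht2 : M 1 2 - M 1 1 / 2 ≤ t := le_trans (le_max_left _ _) (le_max_right _ _)
  have ht3 : M 2 2 / 2 ≤ t := le_trans (le_max_right _ _) (le_max_right _ _)
  have h01 := hd 0 1; have h02 := hd 0 2; have h12 := hd 1 2
  have s10 := hsym 1 0; have s20 := hsym 2 0; have s21 := hsym 2 1
  clear hd hsym ht
  refine ⟨![![M 0 0 / 2, M 1 1 / 2, t], ![M 0 2 - M 2 2 / 2, M 1 2 - M 2 2 / 2, M 2 2 / 2]], ?_⟩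
  intro i j
  constructor
  · intro k
    fin_cases k <;> fin_cases i <;> fin_cases j <;> simp <;> linarith
  · fin_cases i <;> fin_cases j <;>
      first
      | (refine ⟨0, ?_⟩; simp <;> linarith)
      | (refine ⟨1, ?_⟩; simp <;> linarith)

lemma transfer (M : Fin 3 → Fin 3 → ℝ) (π : Equiv.Perm (Fin 3))
    (h : SymRankLe 2 (fun p q => M (π p) (π q))) : SymRankLe 2 M := by
  obtain ⟨v, hv⟩ := h
  refine ⟨fun k l => v k (π.symm l), fun p q => ?_⟩
  simpa using hv (π.symm p) (π.symm q)

lemma constr_pair (M : Fin 3 → Fin 3 → ℝ) (hsym : ∀ i j, M i j = M j i)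
    (hd : ∀ i j, M i i + M j j ≤ 2 * M i j) (i j : Fin 3) (hne : i ≠ j)
    (heq : M i i + M j j = 2 * M i j) : SymRankLe 2 M := by
  fin_cases i <;> fin_cases j <;> simp_all <;>
    first
    | (apply constr01 M hsym hd; linarith [hsym 1 0, hsym 2 0, hsym 2 1])
    | (apply transfer M (Equiv.swap 1 2);
        refine constr01 (fun p q => M (Equiv.swap 1 2 p) (Equiv.swap 1 2 q))
          (fun p q => hsym _ _) (fun p q => hd _ _) ?_;
        simp [Equiv.swap_apply_def] <;> linarith [hsym 1 0, hsym 2 0, hsym 2 1])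
    | (apply transfer M (Equiv.swap 0 2);
        refine constr01 (fun p q => M (Equiv.swap 0 2 p) (Equiv.swap 0 2 q))
          (fun p q => hsym _ _) (fun p q => hd _ _) ?_;
        simp [Equiv.swap_apply_def] <;> linarith [hsym 1 0, hsym 2 0, hsym 2 1])

theorem stmt17 (M : Fin 3 → Fin 3 → ℝ) (hsym : ∀ i j, M i j = M j i) :
    SymRankLe 2 M ↔
      ((∀ i j : Fin 3, M i i + M j j ≤ 2 * M i j) ∧ TropSingular M) := by
  constructor
  · rintro ⟨v, hv⟩
    have hd : ∀ i j : Fin 3, M i i + M j j ≤ 2 * M i j := by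
      intro i j
      obtain ⟨hle, k, hk⟩ := hv i j
      have h1 := (hv i i).1 k
      have h2 := (hv j j).1 k
      simp only at h1 h2 hk
      linarith
    refine ⟨hd, ?_⟩
    obtain ⟨k0, hk0⟩ := (hv 0 0).2
    obtain ⟨k1, hk1⟩ := (hv 1 1).2
    obtain ⟨k2, hk2⟩ := (hv 2 2).2
    simp only at hk0 hk1 hk2
    have tri : k0 = k1 ∨ k0 = k2 ∨ k1 = k2 := by
      fin_cases k0 <;> fin_cases k1 <;> fin_cases k2 <;> simp
    rcases tri with h | h | h
    · subst h
      have h01 := (hv 0 1).1 k0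
      simp only at h01
      exact singular_of_pair M hsym hd 0 1 (by decide)
        (le_antisymm (hd 0 1) (by linarith))
    · subst h
      have h02 := (hv 0 2).1 k0
      simp only at h02
      exact singular_of_pair M hsym hd 0 2 (by decide)
        (le_antisymm (hd 0 2) (by linarith))
    · subst h
      have h12 := (hv 1 2).1 k1
      simp only at h12
      exact singular_of_pair M hsym hd 1 2 (by decide)
        (le_antisymm (hd 1 2) (by linarith))
  · rintro ⟨hd, hsing⟩
    obtain ⟨i, j, hne, heq⟩ := exists_eq_pair M hsym hd hsing
    exact constr_pair M hsym hd i j hne heq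
end

section
/- Let M be the 5×5 0/1 dissimilarity matrix of the 5-cycle: M_{ij} = 0 if j ≡ i ± 1 (mod 5) and M_{ij} = 1 otherwise. Then M cannot be written as the entrywise minimum of 2 tree matrices, but can be written as the entrywise minimum of 3 tree matrices; i.e., its tree rank is exactly 3. -/
/-- The 0/1 dissimilarity matrix of the 5-cycle: zero exactly on pairs of
cyclically adjacent indices. -/
noncomputable def fiveCycleMatrix : Fin 5 → Fin 5 → ℝ := fun i j =>
  if ((i : ℕ) + 1) % 5 = (j : ℕ) ∨ ((j : ℕ) + 1) % 5 = (i : ℕ) then 0 else 1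

/-- Integer version of the five-cycle matrix. -/
def MZcyc : Fin 5 → Fin 5 → ℤ := fun i j =>
  if ((i : ℕ) + 1) % 5 = (j : ℕ) ∨ ((j : ℕ) + 1) % 5 = (i : ℕ) then 0 else 1

lemma fiveCycle_eq_cast (i j : Fin 5) : fiveCycleMatrix i j = ((MZcyc i j : ℤ) : ℝ) := by
  unfold fiveCycleMatrix MZcyc
  split_ifs <;> norm_num

/-- Integer versions of the three tree matrices used for the upper bound. -/
def TZcyc : Fin 3 → Fin 5 → Fin 5 → ℤ :=
  ![![![0,0,1,1,0],![0,0,1,1,1],![1,1,0,2,1],![1,1,2,0,1],![0,1,1,1,0]],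
    ![![0,0,1,1,1],![0,0,0,1,1],![1,0,0,1,1],![1,1,1,0,2],![1,1,1,2,0]],
    ![![0,2,1,1,1],![2,0,1,1,1],![1,1,0,0,1],![1,1,0,0,0],![1,1,1,0,0]]]

lemma TZcyc_tree : ∀ k : Fin 3, (∀ i j, TZcyc k i j = TZcyc k j i) ∧
    (∀ i j l m : Fin 5, i ≠ j → i ≠ l → i ≠ m → j ≠ l → j ≠ m → l ≠ m →
      (TZcyc k i j + TZcyc k l m = TZcyc k i l + TZcyc k j m ∧
        TZcyc k i j + TZcyc k l m ≤ TZcyc k i m + TZcyc k j l) ∨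
      (TZcyc k i j + TZcyc k l m = TZcyc k i m + TZcyc k j l ∧
        TZcyc k i j + TZcyc k l m ≤ TZcyc k i l + TZcyc k j m) ∨
      (TZcyc k i l + TZcyc k j m = TZcyc k i m + TZcyc k j l ∧
        TZcyc k i l + TZcyc k j m ≤ TZcyc k i j + TZcyc k l m)) := by
  decide

lemma TZcyc_decomp : ∀ i j : Fin 5, i ≠ j →
    (∀ k : Fin 3, MZcyc i j ≤ TZcyc k i j) ∧ (∃ k, MZcyc i j = TZcyc k i j) := by
  decide

/-- A tree matrix cannot vanish on two "crossing-positive" disjoint pairs. -/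
def cycTreeReal : Fin 3 → Fin 5 → Fin 5 → ℝ := fun k i j => ((TZcyc k i j : ℤ) : ℝ)

lemma quad {D : Fin 5 → Fin 5 → ℝ} (hT : TreeMatrix D) {a b c d : Fin 5}
    (hab : a ≠ b) (hac : a ≠ c) (had : a ≠ d) (hbc : b ≠ c) (hbd : b ≠ d) (hcd : c ≠ d)
    (h1 : D a b = 0) (h2 : D c d = 0)
    (h3 : 0 < D a c + D b d) (h4 : 0 < D a d + D b c) : False := by
  rcases hT.2 a b c d hab hac had hbc hbd hcd with ⟨e, le⟩ | ⟨e, le⟩ | ⟨e, le⟩ <;> linarith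

theorem stmt18 : ¬ TreeRankLe 2 fiveCycleMatrix ∧ TreeRankLe 3 fiveCycleMatrix := by
  constructor
  · rintro ⟨T, hT, hdec⟩
    have hpos : ∀ (k) (i j : Fin 5), i ≠ j → 0 ≤ T k i j := by
      intro k i j hij
      have h := (hdec i j hij).1 k
      have h0 : (0:ℝ) ≤ fiveCycleMatrix i j := by
        rw [fiveCycle_eq_cast]
        exact_mod_cast (by decide : ∀ i j : Fin 5, 0 ≤ MZcyc i j) i j
      linarith
    have hone : ∀ (k) (i j : Fin 5), i ≠ j → MZcyc i j = 1 → 1 ≤ T k i j := by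
      intro k i j hij h1
      have hle := (hdec i j hij).1 k
      rw [fiveCycle_eq_cast, h1] at hle
      exact_mod_cast hle
    have hzero : ∀ (i j : Fin 5), i ≠ j → MZcyc i j = 0 → ∃ k, T k i j = 0 := by
      intro i j hij h0
      obtain ⟨k, hk⟩ := (hdec i j hij).2
      refine ⟨k, ?_⟩
      have hk' : fiveCycleMatrix i j = T k i j := hk
      rw [← hk', fiveCycle_eq_cast, h0]
      norm_num
    obtain ⟨k0, hk0⟩ := hzero 0 1 (by decide) (by decide)
    obtain ⟨k1, hk1⟩ := hzero 1 2 (by decide) (by decide)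
    obtain ⟨k2, hk2⟩ := hzero 2 3 (by decide) (by decide)
    obtain ⟨k3, hk3⟩ := hzero 3 4 (by decide) (by decide)
    obtain ⟨k4, hk4⟩ := hzero 0 4 (by decide) (by decide)
    have color : ∀ c : Fin 5 → Fin 2,
        c 0 = c 2 ∨ c 0 = c 3 ∨ c 1 = c 3 ∨ c 1 = c 4 ∨ c 2 = c 4 := by decide
    have hcol := color ![k0, k1, k2, k3, k4]
    simp only [Matrix.cons_val_zero, Matrix.cons_val_one, Matrix.head_cons,
      Matrix.cons_val_two, Matrix.tail_cons, Matrix.cons_val_three,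
      Matrix.cons_val_four] at hcol
    rcases hcol with h | h | h | h | h
    · -- edges (0,1) and (2,3)
      rw [← h] at hk2
      exact quad (hT k0) (by decide) (by decide) (by decide) (by decide) (by decide)
        (by decide) hk0 hk2
        (by have := hone k0 0 2 (by decide) (by decide)
            have := hpos k0 1 3 (by decide); linarith)
        (by have := hone k0 0 3 (by decide) (by decide)
            have := hpos k0 1 2 (by decide); linarith)
    · -- edges (0,1) and (3,4)
      rw [← h] at hk3
      exact quad (hT k0) (by decide) (by decide) (by decide) (by decide) (by decide)
        (by decide) hk0 hk3
        (by have := hone k0 0 3 (by decide) (by decide)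
            have := hpos k0 1 4 (by decide); linarith)
        (by have := hone k0 1 3 (by decide) (by decide)
            have := hpos k0 0 4 (by decide); linarith)
    · -- edges (1,2) and (3,4)
      rw [← h] at hk3
      exact quad (hT k1) (by decide) (by decide) (by decide) (by decide) (by decide)
        (by decide) hk1 hk3
        (by have := hone k1 1 3 (by decide) (by decide)
            have := hpos k1 2 4 (by decide); linarith)
        (by have := hone k1 1 4 (by decide) (by decide)
            have := hpos k1 2 3 (by decide); linarith)
    · -- edges (1,2) and (0,4)
      rw [← h] at hk4
      exact quad (hT k1) (by decide) (by decide) (by decide) (by decide) (by decide)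
        (by decide) hk1 hk4
        (by have := hone k1 2 4 (by decide) (by decide)
            have := hpos k1 1 0 (by decide); linarith)
        (by have := hone k1 1 4 (by decide) (by decide)
            have := hone k1 2 0 (by decide) (by decide); linarith)
    · -- edges (2,3) and (0,4)
      rw [← h] at hk4
      exact quad (hT k2) (by decide) (by decide) (by decide) (by decide) (by decide)
        (by decide) hk2 hk4
        (by have := hone k2 2 0 (by decide) (by decide)
            have := hpos k2 3 4 (by decide); linarith)
        (by have := hone k2 2 4 (by decide) (by decide)
            have := hone k2 3 0 (by decide) (by decide); linarith)
  · refine ⟨cycTreeReal, ?_, ?_⟩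
    · intro k
      constructor
      · intro i j
        simp only [cycTreeReal]
        exact_mod_cast (TZcyc_tree k).1 i j
      · intro i j l m h1 h2 h3 h4 h5 h6
        simp only [cycTreeReal]
        rcases (TZcyc_tree k).2 i j l m h1 h2 h3 h4 h5 h6 with
          ⟨e, le⟩ | ⟨e, le⟩ | ⟨e, le⟩
        · exact Or.inl ⟨by exact_mod_cast e, by exact_mod_cast le⟩
        · exact Or.inr (Or.inl ⟨by exact_mod_cast e, by exact_mod_cast le⟩)
        · exact Or.inr (Or.inr ⟨by exact_mod_cast e, by exact_mod_cast le⟩)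
    · intro i j hij
      obtain ⟨hle, k, hk⟩ := TZcyc_decomp i j hij
      constructor
      · intro k'
        simp only [cycTreeReal]
        rw [fiveCycle_eq_cast]
        exact_mod_cast hle k'
      · exact ⟨k, by simp only [cycTreeReal]; rw [fiveCycle_eq_cast, hk]⟩
end
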